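/- arXiv:math/0308103 — 4 statements merged into one kernel-verified Lean document; each statement's English description precedes it below -/
import Mathlib

section
/- Let n ≥ 1 and v, w ∈ S_n. The following are equivalent: (1) w ≤ v in the Bruhat order; (2) the specialized double Schubert polynomial 𝔖_w(y_v; y) is nonzero as a polynomial in y_1,…,y_n; (3) the specialized double Grothendieck polynomial 𝔊_w(b_v; b) is nonzero as a Laurent polynomial in b_1,…,b_n. -/
set_option maxHeartbeats 1000000
set_option synthInstance.maxHeartbeats 400000

open MvPolynomial

/-- The simple transposition `s_{i+1}` (1-based) of `Fin n`, for `i : Fin (n-1)` (0-based). -/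
def sPerm {n : ℕ} (i : Fin (n - 1)) : Equiv.Perm (Fin n) :=
  Equiv.swap ⟨i.val, by have := i.isLt; omega⟩ ⟨i.val + 1, by have := i.isLt; omega⟩

/-- The simple transposition `s_i` of `Fin n` for a 1-based index `i : ℕ`;
junk value `1` out of range. -/
def sPermN {n : ℕ} (i : ℕ) : Equiv.Perm (Fin n) :=
  if h : 1 ≤ i ∧ i ≤ n - 1 then sPerm ⟨i - 1, by omega⟩ else 1

/-- The product of the simple transpositions corresponding to a word. -/
def wordProd {n : ℕ} (l : List (Fin (n - 1))) : Equiv.Perm (Fin n) :=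
  (l.map sPerm).prod

/-- The Coxeter length of a permutation: the minimal length of a word in the
simple transpositions expressing it. -/
noncomputable def len {n : ℕ} (w : Equiv.Perm (Fin n)) : ℕ :=
  sInf {k | ∃ l : List (Fin (n - 1)), wordProd l = w ∧ l.length = k}

/-- `l` is a reduced word for `w`. -/
def IsReducedWord {n : ℕ} (l : List (Fin (n - 1))) (w : Equiv.Perm (Fin n)) : Prop :=
  wordProd l = w ∧ l.length = len w

/-- The longest permutation `w₀` of `S_n`, sending `i ↦ n+1-i` (1-based). -/
def w0 (n : ℕ) : Equiv.Perm (Fin n) := Fin.revPerm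

/-- The Bruhat order: `w ≤ v` iff some reduced word for `v` contains a subword
that is a reduced word for `w`. -/
noncomputable def bruhatLE {n : ℕ} (w v : Equiv.Perm (Fin n)) : Prop :=
  ∃ l l' : List (Fin (n - 1)), IsReducedWord l v ∧ l'.Sublist l ∧ IsReducedWord l' w

/-- The lower of the two points moved by `s_{i+1}`. -/
def fLo {n : ℕ} (i : Fin (n - 1)) : Fin n := ⟨i.val, by have := i.isLt; omega⟩

/-- The upper of the two points moved by `s_{i+1}`. -/
def fHi {n : ℕ} (i : Fin (n - 1)) : Fin n := ⟨i.val + 1, by have := i.isLt; omega⟩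

/-- The family of double Schubert polynomials `𝔖_w(x;y)`, with `x`-variables
indexed by `Sum.inl` and `y`-variables by `Sum.inr`: it is characterized by
`𝔖_{w₀} = ∏_{i+j ≤ n} (x_i - y_j)` together with the divided difference
recursion `(x_i - x_{i+1}) ∂_i 𝔖_w = 𝔖_w - s_i 𝔖_w` whenever `ℓ(w s_i) < ℓ(w)`. -/
def SchubertFamily (n : ℕ)
    (S : Equiv.Perm (Fin n) → MvPolynomial (Fin n ⊕ Fin n) ℤ) : Prop :=
  S (w0 n) =
    ∏ p ∈ Finset.univ.filter (fun p : Fin n × Fin n => p.1.val + p.2.val + 2 ≤ n),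
      (X (Sum.inl p.1) - X (Sum.inr p.2)) ∧
  ∀ (w : Equiv.Perm (Fin n)) (i : Fin (n - 1)), len (w * sPerm i) < len w →
    (X (Sum.inl (fLo i)) - X (Sum.inl (fHi i))) * S (w * sPerm i) =
      S w - rename (Equiv.sumCongr (sPerm i) (Equiv.refl (Fin n))) (S w)

/-- Specialization `x_j = y_{v(j)}` of a polynomial in `x;y`, landing in the
polynomial ring in the `y`-variables (indexed by `Fin n`). -/
noncomputable def specS {n : ℕ} (v : Equiv.Perm (Fin n)) :
    MvPolynomial (Fin n ⊕ Fin n) ℤ →ₐ[ℤ] MvPolynomial (Fin n) ℤ :=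
  aeval (Sum.elim (fun j => X (v j)) X)

/-- The multiplicative set of monomials in a multivariate polynomial ring over `ℤ`. -/
noncomputable def varMon (σ : Type) : Submonoid (MvPolynomial σ ℤ) :=
  Submonoid.closure (Set.range MvPolynomial.X)

/-- The ring of Laurent polynomials over `ℤ` in variables indexed by `σ`,
realized as the localization of `MvPolynomial σ ℤ` at the monomials. -/
abbrev LaurentMv (σ : Type) := Localization (varMon σ)

/-- The variable `X s` as a Laurent polynomial. -/
noncomputable def Xu {σ : Type} (s : σ) : LaurentMv σ :=
  algebraMap (MvPolynomial σ ℤ) (LaurentMv σ) (MvPolynomial.X s)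

/-- The inverse `(X s)⁻¹` of a variable, as a Laurent polynomial. -/
noncomputable def XuInv {σ : Type} (s : σ) : LaurentMv σ :=
  Localization.mk 1 ⟨MvPolynomial.X s, Submonoid.subset_closure ⟨s, rfl⟩⟩

theorem isUnit_Xu {σ : Type} (s : σ) : IsUnit (Xu s) :=
  IsLocalization.map_units (M := varMon σ) (LaurentMv σ)
    ⟨MvPolynomial.X s, Submonoid.subset_closure ⟨s, rfl⟩⟩

/-- Substitution of units for the variables, as a ring homomorphism on
Laurent polynomial rings. -/
noncomputable def substLaurent {σ τ : Type} (f : σ → LaurentMv τ)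
    (hf : ∀ s, IsUnit (f s)) : LaurentMv σ →+* LaurentMv τ :=
  IsLocalization.lift (M := varMon σ) (g := (MvPolynomial.aeval f).toRingHom)
    (by
      rintro ⟨y, hy⟩
      induction hy using Submonoid.closure_induction with
      | mem x hx =>
          obtain ⟨s, rfl⟩ := hx
          simpa using hf s
      | one => simp
      | mul x y _ _ hx hy => simpa [map_mul] using hx.mul hy)

/-- The action of `s_i` on the `a`-variables (indexed by `Sum.inl`) of the
Laurent polynomial ring in `a;b`. -/
noncomputable def sActL {n : ℕ} (i : Fin (n - 1)) :
    LaurentMv (Fin n ⊕ Fin n) →+* LaurentMv (Fin n ⊕ Fin n) :=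
  substLaurent (fun s => Xu (Equiv.sumCongr (sPerm i) (Equiv.refl (Fin n)) s))
    (fun _ => isUnit_Xu _)

/-- The family of double Grothendieck polynomials `𝔊_w(a;b)`, as Laurent
polynomials with `a`-variables indexed by `Sum.inl` and `b`-variables by
`Sum.inr`: it is characterized by `𝔊_{w₀} = ∏_{i+j ≤ n} (1 - b_j/a_i)`
together with the recursion `𝔊_{w s_i} = π_i 𝔊_w` (written multiplied
through by `a_i - a_{i+1}`) whenever `ℓ(w s_i) < ℓ(w)`. -/
def GrothFamily (n : ℕ)
    (G : Equiv.Perm (Fin n) → LaurentMv (Fin n ⊕ Fin n)) : Prop :=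
  G (w0 n) =
    ∏ p ∈ Finset.univ.filter (fun p : Fin n × Fin n => p.1.val + p.2.val + 2 ≤ n),
      (1 - Xu (Sum.inr p.2) * XuInv (Sum.inl p.1)) ∧
  ∀ (w : Equiv.Perm (Fin n)) (i : Fin (n - 1)), len (w * sPerm i) < len w →
    (Xu (Sum.inl (fLo i)) - Xu (Sum.inl (fHi i))) * G (w * sPerm i) =
      Xu (Sum.inl (fLo i)) * G w - Xu (Sum.inl (fHi i)) * sActL i (G w)

/-- Specialization `a_j = b_{v(j)}` of a Laurent polynomial in `a;b`, landing
in the Laurent polynomial ring in the `b`-variables (indexed by `Fin n`). -/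
noncomputable def specG {n : ℕ} (v : Equiv.Perm (Fin n)) :
    LaurentMv (Fin n ⊕ Fin n) →+* LaurentMv (Fin n) :=
  substLaurent (Sum.elim (fun j => Xu (v j)) Xu)
    (by rintro (j | j) <;> exact isUnit_Xu _)


namespace BR

open Equiv List Finset

variable {n : ℕ}

lemma fLo_val (i : Fin (n-1)) : (fLo i : Fin n).val = i.val := rfl
lemma fHi_val (i : Fin (n-1)) : (fHi i : Fin n).val = i.val + 1 := rfl

lemma fLo_ne_fHi (i : Fin (n-1)) : (fLo i : Fin n) ≠ fHi i := by
  simp [Fin.ext_iff, fLo_val, fHi_val]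

lemma sPerm_eq_swap (i : Fin (n-1)) : sPerm (n := n) i = Equiv.swap (fLo i) (fHi i) := rfl

lemma sPerm_fLo (i : Fin (n-1)) : sPerm i (fLo i) = fHi i := Equiv.swap_apply_left _ _
lemma sPerm_fHi (i : Fin (n-1)) : sPerm i (fHi i) = fLo i := Equiv.swap_apply_right _ _

lemma sPerm_mul_self (i : Fin (n-1)) : sPerm (n := n) i * sPerm i = 1 := Equiv.swap_mul_self _ _

lemma mul_sPerm_mul_sPerm (w : Perm (Fin n)) (i : Fin (n-1)) :
    w * sPerm i * sPerm i = w := by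
  rw [mul_assoc, sPerm_mul_self, mul_one]

lemma sPerm_apply_def (i : Fin (n-1)) (x : Fin n) :
    sPerm i x = if x = fLo i then fHi i else if x = fHi i then fLo i else x :=
  Equiv.swap_apply_def _ _ x

/-- adjacent swap preserves order except on the swapped pair itself -/
lemma sPerm_lt_sPerm {i : Fin (n-1)} {x y : Fin n} (hxy : x < y)
    (hne : ¬(x = fLo i ∧ y = fHi i)) : sPerm i x < sPerm i y := by
  have hi := i.isLt
  have hne' : ¬(x.val = i.val ∧ y.val = i.val + 1) := by
    simpa only [Fin.ext_iff, fLo_val, fHi_val] using hne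
  rcases not_and_or.1 hne' with hc | hc <;>
  · rw [Fin.lt_def] at hxy ⊢
    rw [sPerm_apply_def, sPerm_apply_def]
    simp only [Fin.ext_iff, fLo_val, fHi_val]
    split_ifs <;> (try simp only [fLo_val, fHi_val]) <;> omega

/-- the (finite) inversion count of a permutation -/
def invC (w : Perm (Fin n)) : ℕ :=
  (Finset.univ.filter fun p : Fin n × Fin n => p.1 < p.2 ∧ w p.2 < w p.1).card

lemma invC_one : invC (1 : Perm (Fin n)) = 0 := by
  simp only [invC, Finset.card_eq_zero, Finset.filter_eq_empty_iff]
  rintro p -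
  simp only [Perm.one_apply, not_and]
  intro h; exact asymm h

lemma invC_mul_sPerm_of_lt {w : Perm (Fin n)} {i : Fin (n-1)}
    (h : w (fLo i) < w (fHi i)) : invC (w * sPerm i) = invC w + 1 := by
  classical
  let s := sPerm (n := n) i
  have hs : s = sPerm (n := n) i := rfl
  set A := (Finset.univ.filter fun p : Fin n × Fin n => p.1 < p.2 ∧ (w * s) p.2 < (w * s) p.1)
    with hA
  set B := (Finset.univ.filter fun p : Fin n × Fin n => p.1 < p.2 ∧ w p.2 < w p.1) with hB
  have hsls : ∀ x, s (s x) = x := fun x => by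
    have := congrArg (fun u => u x) (sPerm_mul_self i); simpa using this
  have hmem : ∀ p : Fin n × Fin n, p ∈ A ↔ (p.1 < p.2 ∧ w (s p.2) < w (s p.1)) := by
    intro p; rw [hA, Finset.mem_filter]; simp [Perm.mul_apply]
  have hmemB : ∀ p : Fin n × Fin n, p ∈ B ↔ (p.1 < p.2 ∧ w p.2 < w p.1) := by
    intro p; simp [hB]
  have key : A = insert (fLo i, fHi i) (B.image fun p => (s p.1, s p.2)) := by
    apply Finset.ext; intro p
    constructor
    · intro hp
      rw [hmem] at hp
      by_cases hplo : p = (fLo i, fHi i)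
      · simp [hplo]
      · refine Finset.mem_insert_of_mem (Finset.mem_image.2 ⟨(s p.1, s p.2), ?_, ?_⟩)
        · rw [hmemB]
          refine ⟨?_, by simpa using hp.2⟩
          rcases lt_trichotomy (s p.1) (s p.2) with h1 | h1 | h1
          · exact h1
          · exact absurd (s.injective h1) (ne_of_lt hp.1)
          · exfalso
            have := sPerm_lt_sPerm (i := i) h1 ?_
            · rw [hsls, hsls] at this; exact absurd hp.1 (not_lt.2 this.le)
            · rintro ⟨h2, h3⟩
              have e1 : p.2 = s (fLo i) := by rw [← h2, hsls]
              have e2 : p.1 = s (fHi i) := by rw [← h3, hsls]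
              rw [hs, sPerm_fLo] at e1; rw [hs, sPerm_fHi] at e2
              exact hplo (Prod.ext e2 e1)
        · simp [hsls]
    · intro hp
      rcases Finset.mem_insert.1 hp with hp | hp
      · rw [hp, hmem]
        refine ⟨by simp [Fin.lt_def, fLo_val, fHi_val], ?_⟩
        rw [hs, sPerm_fLo, sPerm_fHi]; exact h
      · obtain ⟨q, hq, rfl⟩ := Finset.mem_image.1 hp
        rw [hmemB] at hq
        rw [hmem]
        refine ⟨?_, by simpa [hsls] using hq.2⟩
        apply sPerm_lt_sPerm hq.1
        rintro ⟨h2, h3⟩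
        rw [h2, h3] at hq
        exact absurd h (not_lt.2 hq.2.le)
  have hnotin : (fLo i, fHi i) ∉ B.image fun p => (s p.1, s p.2) := by
    rw [Finset.mem_image]
    rintro ⟨q, hq, he⟩
    rw [hmemB] at hq
    have e1 : q.1 = fHi i := by
      have := congrArg Prod.fst he
      have : s q.1 = fLo i := this
      rw [← hsls q.1, this, sPerm_fLo]
    have e2 : q.2 = fLo i := by
      have := congrArg Prod.snd he
      have : s q.2 = fHi i := this
      rw [← hsls q.2, this, sPerm_fHi]
    rw [e1, e2] at hq
    exact absurd hq.1 (by simp [Fin.lt_def, fLo_val, fHi_val])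
  have hinj : Set.InjOn (fun p : Fin n × Fin n => (s p.1, s p.2)) B := by
    rintro p _ q _ he
    have h1 := congrArg Prod.fst he
    have h2 := congrArg Prod.snd he
    simp only at h1 h2
    exact Prod.ext (s.injective h1) (s.injective h2)
  show A.card = B.card + 1
  rw [key, Finset.card_insert_of_notMem hnotin, Finset.card_image_of_injOn hinj]

lemma invC_mul_sPerm_of_gt {w : Perm (Fin n)} {i : Fin (n-1)}
    (h : w (fHi i) < w (fLo i)) : invC w = invC (w * sPerm i) + 1 := by
  have h2 : (w * sPerm i) (fLo i) < (w * sPerm i) (fHi i) := by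
    simpa [Perm.mul_apply, sPerm_fLo, sPerm_fHi] using h
  have := invC_mul_sPerm_of_lt h2
  rwa [mul_sPerm_mul_sPerm] at this

lemma apply_fLo_ne_fHi (w : Perm (Fin n)) (i : Fin (n-1)) : w (fLo i) ≠ w (fHi i) :=
  fun h => fLo_ne_fHi i (w.injective h)

lemma eq_one_of_forall_lt {w : Perm (Fin n)} (h : ∀ i : Fin (n-1), w (fLo i) < w (fHi i)) :
    w = 1 := by
  have adj : ∀ x y : Fin n, x.val + 1 = y.val → w x < w y := by
    intro x y hxy
    have hix : x.val < n - 1 := by have := y.isLt; omega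
    have e1 : (fLo ⟨x.val, hix⟩ : Fin n) = x := Fin.ext rfl
    have e2 : (fHi ⟨x.val, hix⟩ : Fin n) = y := Fin.ext hxy
    have := h ⟨x.val, hix⟩
    rwa [e1, e2] at this
  have hsm : StrictMono w := by
    have step : ∀ d : ℕ, ∀ x y : Fin n, x < y → y.val - x.val = d → w x < w y := by
      intro d
      induction d using Nat.strong_induction_on with
      | _ d ih =>
        intro x y hxy hd
        have hxv : x.val < y.val := hxy
        rcases Nat.lt_or_ge (x.val + 1) y.val with hcase | hcase
        · have hlt : x.val + 1 < n := by have := y.isLt; omega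
          have hmid : (⟨x.val + 1, hlt⟩ : Fin n) < y := by
            rw [Fin.lt_def]; exact hcase
          have h1 : w x < w ⟨x.val + 1, hlt⟩ := adj _ _ rfl
          have h2 : w ⟨x.val + 1, hlt⟩ < w y :=
            ih (y.val - (x.val + 1)) (by omega) _ _ hmid rfl
          exact h1.trans h2
        · exact adj x y (by omega)
    exact fun x y hxy => step (y.val - x.val) x y hxy rfl
  have : (w : Fin n → Fin n) = id :=
    (StrictMono.range_inj hsm strictMono_id).1
      (by rw [Set.range_id, Set.range_eq_univ]; exact w.surjective)
  exact Equiv.ext fun x => congrFun this x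

lemma w0_apply (x : Fin n) : w0 n x = x.rev := rfl

lemma eq_w0_of_forall_gt {w : Perm (Fin n)} (h : ∀ i : Fin (n-1), w (fHi i) < w (fLo i)) :
    w = w0 n := by
  have h1 : Fin.revPerm * w = 1 := by
    apply eq_one_of_forall_lt
    intro i
    have := h i
    simp only [Perm.mul_apply, Fin.revPerm_apply]
    exact Fin.rev_lt_rev.2 this
  have h2 : w = Fin.revPerm⁻¹ := (inv_eq_of_mul_eq_one_right h1).symm
  have h3 : (Fin.revPerm : Perm (Fin n)) * Fin.revPerm = 1 := Equiv.ext fun x => by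
    simp [Fin.rev_rev]
  have h4 : (Fin.revPerm : Perm (Fin n))⁻¹ = Fin.revPerm := inv_eq_of_mul_eq_one_right h3
  rw [h2, h4]; rfl

lemma exists_descent_or_eq_one (w : Perm (Fin n)) :
    w = 1 ∨ ∃ i : Fin (n-1), w (fHi i) < w (fLo i) := by
  by_cases h : ∀ i : Fin (n-1), w (fLo i) < w (fHi i)
  · exact Or.inl (eq_one_of_forall_lt h)
  · push_neg at h
    obtain ⟨i, hi⟩ := h
    exact Or.inr ⟨i, lt_of_le_of_ne hi (fun e => apply_fLo_ne_fHi w i e.symm)⟩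

lemma exists_nondescent_or_eq_w0 (w : Perm (Fin n)) :
    w = w0 n ∨ ∃ i : Fin (n-1), w (fLo i) < w (fHi i) := by
  by_cases h : ∀ i : Fin (n-1), w (fHi i) < w (fLo i)
  · exact Or.inl (eq_w0_of_forall_gt h)
  · push_neg at h
    obtain ⟨i, hi⟩ := h
    exact Or.inr ⟨i, lt_of_le_of_ne hi (apply_fLo_ne_fHi w i)⟩

end BR

namespace BR

open Equiv List Finset

variable {n : ℕ}

lemma wordProd_nil : wordProd ([] : List (Fin (n-1))) = 1 := rfl

lemma wordProd_append (l l' : List (Fin (n-1))) :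
    wordProd (l ++ l') = wordProd l * wordProd l' := by
  simp [wordProd, List.map_append, List.prod_append]

lemma wordProd_concat (l : List (Fin (n-1))) (i : Fin (n-1)) :
    wordProd (l ++ [i]) = wordProd l * sPerm i := by
  rw [wordProd_append]; simp [wordProd]

lemma exists_word_invC (w : Perm (Fin n)) :
    ∃ l : List (Fin (n-1)), wordProd l = w ∧ l.length = invC w := by
  generalize hk : invC w = k
  induction k using Nat.strong_induction_on generalizing w with
  | _ k ih =>
    rcases exists_descent_or_eq_one w with rfl | ⟨i, hi⟩
    · exact ⟨[], rfl, by rw [← hk, invC_one]; rfl⟩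
    · have hstep := invC_mul_sPerm_of_gt hi
      have hk' : invC (w * sPerm i) = k - 1 := by omega
      obtain ⟨l, hl, hlen⟩ := ih (k-1) (by omega) (w * sPerm i) hk'
      refine ⟨l ++ [i], ?_, ?_⟩
      · rw [wordProd_concat, hl, mul_sPerm_mul_sPerm]
      · simp [hlen]; omega

lemma invC_mul_sPerm_le (w : Perm (Fin n)) (i : Fin (n-1)) :
    invC (w * sPerm i) ≤ invC w + 1 := by
  rcases lt_or_gt_of_ne (apply_fLo_ne_fHi w i) with h | h
  · exact le_of_eq (invC_mul_sPerm_of_lt h)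
  · have := invC_mul_sPerm_of_gt h; omega

lemma invC_wordProd_le (l : List (Fin (n-1))) : invC (wordProd l) ≤ l.length := by
  induction l using List.reverseRecOn with
  | nil => simp [wordProd_nil, invC_one]
  | append_singleton l i ih =>
    rw [wordProd_concat]
    calc invC (wordProd l * sPerm i) ≤ invC (wordProd l) + 1 := invC_mul_sPerm_le _ _
    _ ≤ l.length + 1 := by omega
    _ = (l ++ [i]).length := by simp

lemma len_eq_invC (w : Perm (Fin n)) : len w = invC w := by
  apply _root_.le_antisymm
  · obtain ⟨l, hl, hlen⟩ := exists_word_invC w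
    exact Nat.sInf_le ⟨l, hl, hlen⟩
  · have hne : {k | ∃ l : List (Fin (n-1)), wordProd l = w ∧ l.length = k}.Nonempty := by
      obtain ⟨l, hl, hlen⟩ := exists_word_invC w
      exact ⟨invC w, l, hl, hlen⟩
    obtain ⟨l, hl, hlen⟩ := Nat.sInf_mem hne
    rw [show len w = sInf {k | ∃ l : List (Fin (n-1)), wordProd l = w ∧ l.length = k} from rfl,
      ← hlen, ← hl]
    exact invC_wordProd_le l

lemma exists_reduced_word (w : Perm (Fin n)) :
    ∃ l : List (Fin (n-1)), IsReducedWord l w := by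
  obtain ⟨l, hl, hlen⟩ := exists_word_invC w
  exact ⟨l, hl, by rw [hlen, len_eq_invC]⟩

lemma len_one : len (1 : Perm (Fin n)) = 0 := by rw [len_eq_invC, invC_one]

lemma len_le_of_word (l : List (Fin (n-1))) : len (wordProd l) ≤ l.length := by
  rw [len_eq_invC]; exact invC_wordProd_le l

lemma len_mul_sPerm_of_lt {w : Perm (Fin n)} {i : Fin (n-1)}
    (h : w (fLo i) < w (fHi i)) : len (w * sPerm i) = len w + 1 := by
  rw [len_eq_invC, len_eq_invC]; exact invC_mul_sPerm_of_lt h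

lemma len_mul_sPerm_of_gt {w : Perm (Fin n)} {i : Fin (n-1)}
    (h : w (fHi i) < w (fLo i)) : len w = len (w * sPerm i) + 1 := by
  rw [len_eq_invC, len_eq_invC]; exact invC_mul_sPerm_of_gt h

lemma descent_iff {w : Perm (Fin n)} {i : Fin (n-1)} :
    len (w * sPerm i) < len w ↔ w (fHi i) < w (fLo i) := by
  constructor
  · intro h
    rcases lt_or_gt_of_ne (apply_fLo_ne_fHi w i) with h2 | h2
    · rw [len_mul_sPerm_of_lt h2] at h; omega
    · exact h2
  · intro h; rw [len_mul_sPerm_of_gt h]; omega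

lemma nondescent_iff {w : Perm (Fin n)} {i : Fin (n-1)} :
    len w < len (w * sPerm i) ↔ w (fLo i) < w (fHi i) := by
  constructor
  · intro h
    rcases lt_or_gt_of_ne (apply_fLo_ne_fHi w i) with h2 | h2
    · exact h2
    · rw [len_mul_sPerm_of_gt h2] at h; omega
  · intro h; rw [len_mul_sPerm_of_lt h]; omega

lemma len_eq_zero_iff {w : Perm (Fin n)} : len w = 0 ↔ w = 1 := by
  constructor
  · intro h
    rcases exists_descent_or_eq_one w with rfl | ⟨i, hi⟩
    · rfl
    · exfalso; have := len_mul_sPerm_of_gt hi; omega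
  · rintro rfl; exact len_one

lemma invC_le_invC_w0 (w : Perm (Fin n)) : invC w ≤ invC (w0 n) := by
  have h1 : ∀ p : Fin n × Fin n, p.1 < p.2 → (w0 n) p.2 < (w0 n) p.1 := by
    intro p hp
    simp only [w0_apply]
    exact Fin.rev_lt_rev.2 hp
  apply Finset.card_le_card
  intro p hp
  simp only [Finset.mem_filter] at hp ⊢
  exact ⟨hp.1, hp.2.1, h1 p hp.2.1⟩

lemma eq_w0_of_invC_eq {w : Perm (Fin n)} (h : invC w = invC (w0 n)) : w = w0 n := by
  apply eq_w0_of_forall_gt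
  intro i
  have hsub : (Finset.univ.filter fun p : Fin n × Fin n => p.1 < p.2 ∧ w p.2 < w p.1) =
      (Finset.univ.filter fun p : Fin n × Fin n => p.1 < p.2 ∧ (w0 n) p.2 < (w0 n) p.1) := by
    apply Finset.eq_of_subset_of_card_le
    · intro p hp
      simp only [Finset.mem_filter] at hp ⊢
      refine ⟨hp.1, hp.2.1, ?_⟩
      simp only [w0_apply]
      exact Fin.rev_lt_rev.2 hp.2.1
    · exact le_of_eq h.symm
  have hmem : ((fLo i : Fin n), (fHi i : Fin n)) ∈
      (Finset.univ.filter fun p : Fin n × Fin n => p.1 < p.2 ∧ w p.2 < w p.1) := by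
    rw [hsub]
    simp only [Finset.mem_filter, Finset.mem_univ, true_and]
    have hlt : (fLo i : Fin n) < fHi i := by simp [Fin.lt_def, fLo_val, fHi_val]
    exact ⟨hlt, by simp only [w0_apply]; exact Fin.rev_lt_rev.2 hlt⟩
  simp only [Finset.mem_filter] at hmem
  exact hmem.2.2

lemma len_lt_len_w0 {w : Perm (Fin n)} (h : w ≠ w0 n) : len w < len (w0 n) := by
  rw [len_eq_invC, len_eq_invC]
  rcases lt_or_eq_of_le (invC_le_invC_w0 w) with h2 | h2
  · exact h2
  · exact absurd (eq_w0_of_invC_eq h2) h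

/-- downward induction from `w0` -/
lemma downward_induction {P : Perm (Fin n) → Prop} (h0 : P (w0 n))
    (hstep : ∀ w, w ≠ w0 n →
      (∀ i : Fin (n-1), w (fLo i) < w (fHi i) → P (w * sPerm i)) → P w) :
    ∀ w, P w := by
  have key : ∀ k : ℕ, ∀ w : Perm (Fin n), len (w0 n) - len w = k → P w := by
    intro k
    induction k using Nat.strong_induction_on with
    | _ k ih =>
      intro w hk
      by_cases hw : w = w0 n
      · rw [hw]; exact h0
      · refine hstep w hw ?_
        intro i hi
        have h1 := len_mul_sPerm_of_lt hi
        have h2 := len_lt_len_w0 hw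
        exact ih (len (w0 n) - len (w * sPerm i)) (by omega) _ rfl
  exact fun w => key (len (w0 n) - len w) w rfl

/-- peeling the last letter of a reduced word -/
lemma reduced_concat_peel {l : List (Fin (n-1))} {j : Fin (n-1)}
    (h : len (wordProd (l ++ [j])) = (l ++ [j]).length) :
    len (wordProd l) = l.length ∧
    (wordProd l) (fLo j) < (wordProd l) (fHi j) := by
  set u := wordProd l with hu
  have hv : wordProd (l ++ [j]) = u * sPerm j := wordProd_concat l j
  have h1 : len u ≤ l.length := len_le_of_word l
  have h2 : len (u * sPerm j) = l.length + 1 := by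
    rw [← hv, h]; simp
  rcases lt_or_gt_of_ne (apply_fLo_ne_fHi u j) with h3 | h3
  · have := len_mul_sPerm_of_lt h3
    exact ⟨by omega, h3⟩
  · have := len_mul_sPerm_of_gt h3
    omega

lemma len_w0_eq_zero_of_le_one (hn : n ≤ 1) : ∀ w : Perm (Fin n), w = 1 := by
  intro w
  apply Equiv.ext
  intro x
  interval_cases n
  · exact absurd x.isLt (by omega)
  · omega

end BR

namespace BR

open MvPolynomial Equiv List

variable {n : ℕ}

lemma specS_X_inl (v : Perm (Fin n)) (j : Fin n) :
    specS v (X (Sum.inl j)) = X (v j) := by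
  simp [specS]

lemma specS_X_inr (v : Perm (Fin n)) (j : Fin n) :
    specS v (X (Sum.inr j)) = X j := by
  simp [specS]

lemma specS_rename (v : Perm (Fin n)) (i : Fin (n-1))
    (f : MvPolynomial (Fin n ⊕ Fin n) ℤ) :
    specS v (rename (Equiv.sumCongr (sPerm i) (Equiv.refl (Fin n))) f) =
      specS (v * sPerm i) f := by
  show (aeval _) (rename _ f) = _
  rw [aeval_rename]
  have he : (Sum.elim (fun j => X (v j)) X ∘ ⇑(Equiv.sumCongr (sPerm i) (Equiv.refl (Fin n))))
      = (Sum.elim (fun j => X ((v * sPerm i) j)) X :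
        Fin n ⊕ Fin n → MvPolynomial (Fin n) ℤ) := by
    funext x
    cases x with
    | inl j => simp [Perm.mul_apply]
    | inr j => simp
  rw [he]
  rfl

lemma X_sub_X_ne_zero {a b : Fin n} (h : a ≠ b) :
    (X a - X b : MvPolynomial (Fin n) ℤ) ≠ 0 :=
  sub_ne_zero_of_ne fun e => h (MvPolynomial.X_injective e)

lemma starS {S : Perm (Fin n) → MvPolynomial (Fin n ⊕ Fin n) ℤ}
    (hS : SchubertFamily n S) {w : Perm (Fin n)} {i : Fin (n-1)}
    (h : len (w * sPerm i) < len w) (v : Perm (Fin n)) :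
    (X (v (fLo i)) - X (v (fHi i))) * specS v (S (w * sPerm i)) =
      specS v (S w) - specS (v * sPerm i) (S w) := by
  have := congrArg (specS v) (hS.2 w i h)
  rw [map_mul, map_sub, map_sub, specS_X_inl, specS_X_inl, specS_rename] at this
  exact this

lemma perm_ge_eq_one {u : Perm (Fin n)} (h : ∀ b : Fin n, b ≤ u b) : u = 1 := by
  have key : ∀ k : ℕ, ∀ b : Fin n, n - 1 - b.val = k → u b = b := by
    intro k
    induction k using Nat.strong_induction_on with
    | _ k ih =>
      intro b hb
      have hub := h b
      rcases lt_or_eq_of_le hub with hlt | heq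
      · exfalso
        have h1 : b.val < (u b).val := hlt
        have h2 : u (u b) = u b := ih (n - 1 - (u b).val) (by have := (u b).isLt; omega) (u b) rfl
        have h3 := u.injective h2
        rw [h3] at hlt
        exact lt_irrefl _ hlt
      · exact heq.symm
  exact Equiv.ext fun b => key (n - 1 - b.val) b rfl

lemma exists_zero_pair {v : Perm (Fin n)} (h : v ≠ w0 n) :
    ∃ a : Fin n, a.val + (v a).val + 2 ≤ n := by
  by_contra hc
  push_neg at hc
  apply h
  have hge : ∀ a : Fin n, (a.rev : Fin n) ≤ v a := by
    intro a
    have h1 := hc a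
    have h2 := a.isLt
    have h3 := (v a).isLt
    rw [Fin.le_def]
    simp only [Fin.val_rev]
    omega
  have h0 : v * Fin.revPerm = 1 := by
    apply perm_ge_eq_one
    intro b
    have := hge b.rev
    simpa [Fin.rev_rev] using this
  have h2 : v = Fin.revPerm⁻¹ := mul_eq_one_iff_eq_inv.1 h0
  have h3 : (Fin.revPerm : Perm (Fin n)) * Fin.revPerm = 1 := Equiv.ext fun x => by
    simp [Fin.rev_rev]
  rw [h2, inv_eq_of_mul_eq_one_right h3]; rfl

lemma triangularS {S : Perm (Fin n) → MvPolynomial (Fin n ⊕ Fin n) ℤ}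
    (hS : SchubertFamily n S) :
    ∀ w v : Perm (Fin n), len v < len w → specS v (S w) = 0 := by
  apply downward_induction
    (P := fun w => ∀ v : Perm (Fin n), len v < len w → specS v (S w) = 0)
  · intro v hv
    have hvne : v ≠ w0 n := fun e => by rw [e] at hv; exact lt_irrefl _ hv
    obtain ⟨a, ha⟩ := exists_zero_pair hvne
    rw [hS.1, map_prod]
    apply Finset.prod_eq_zero (i := (a, v a))
    · simp only [Finset.mem_filter, Finset.mem_univ, true_and]
      exact ha
    · rw [map_sub, specS_X_inl, specS_X_inr, sub_self]
  · intro w hw ih v hv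
    obtain ⟨i, hi⟩ := (exists_nondescent_or_eq_w0 w).resolve_left hw
    have hlen := len_mul_sPerm_of_lt hi
    have hdesc : len ((w * sPerm i) * sPerm i) < len (w * sPerm i) := by
      rw [mul_sPerm_mul_sPerm]; omega
    have hstar := starS hS hdesc v
    rw [mul_sPerm_mul_sPerm] at hstar
    have h1 : specS v (S (w * sPerm i)) = 0 := ih i hi v (by omega)
    have h2 : specS (v * sPerm i) (S (w * sPerm i)) = 0 := by
      apply ih i hi
      rcases lt_or_gt_of_ne (apply_fLo_ne_fHi v i) with h3 | h3
      · rw [len_mul_sPerm_of_lt h3]; omega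
      · have := len_mul_sPerm_of_gt h3; omega
    rw [h1, h2, sub_zero] at hstar
    have hD : (X (v (fLo i)) - X (v (fHi i)) : MvPolynomial (Fin n) ℤ) ≠ 0 :=
      X_sub_X_ne_zero (apply_fLo_ne_fHi v i)
    exact (mul_eq_zero.1 hstar).resolve_left hD

/-- the inversion-pair set indexing the diagonal product -/
def diagSet (w : Perm (Fin n)) : Finset (Fin n × Fin n) :=
  Finset.univ.filter fun p => p.2 < p.1 ∧ w.symm p.1 < w.symm p.2

lemma diagSet_one : diagSet (1 : Perm (Fin n)) = ∅ := by
  apply Finset.filter_eq_empty_iff.2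
  rintro p -
  rintro ⟨h1, h2⟩
  have h3 : p.1 < p.2 := h2
  exact absurd h1 (asymm h3)

lemma diagSet_w0 : diagSet (w0 n) = Finset.univ.filter fun p : Fin n × Fin n => p.2 < p.1 := by
  unfold diagSet
  apply Finset.filter_congr
  rintro p -
  constructor
  · rintro ⟨h1, -⟩; exact h1
  · intro h1
    refine ⟨h1, ?_⟩
    show (w0 n).symm p.1 < (w0 n).symm p.2
    have he : (w0 n).symm = Fin.revPerm := Fin.revPerm_symm
    rw [he]
    simpa using h1

lemma symm_mul_sPerm (w : Perm (Fin n)) (i : Fin (n-1)) (x : Fin n) :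
    (w * sPerm i).symm x = sPerm i (w.symm x) := by
  have h1 : (sPerm (n := n) i)⁻¹ = sPerm i := inv_eq_of_mul_eq_one_right (sPerm_mul_self i)
  have h2 : (w * sPerm i)⁻¹ = sPerm i * w⁻¹ := by rw [mul_inv_rev, h1]
  have h3 : (w * sPerm i).symm = sPerm i * w⁻¹ := h2
  rw [h3]
  rfl

lemma diagSet_mul_sPerm {w : Perm (Fin n)} {i : Fin (n-1)} (h : w (fLo i) < w (fHi i)) :
    diagSet (w * sPerm i) = insert (w (fHi i), w (fLo i)) (diagSet w) := by
  apply Finset.ext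
  rintro ⟨p1, p2⟩
  simp only [diagSet, Finset.mem_filter, Finset.mem_univ, true_and, Finset.mem_insert,
    Prod.mk.injEq]
  rw [symm_mul_sPerm, symm_mul_sPerm]
  constructor
  · rintro ⟨h1, h2⟩
    by_cases hc : w.symm p1 = fHi i ∧ w.symm p2 = fLo i
    · left
      constructor
      · rw [← hc.1, Equiv.apply_symm_apply]
      · rw [← hc.2, Equiv.apply_symm_apply]
    · right
      refine ⟨h1, ?_⟩
      rcases lt_trichotomy (w.symm p1) (w.symm p2) with hlt | heq | hgt
      · exact hlt
      · exfalso; rw [heq] at h2; exact lt_irrefl _ h2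
      · exfalso
        by_cases hc2 : w.symm p2 = fLo i ∧ w.symm p1 = fHi i
        · exact hc ⟨hc2.2, hc2.1⟩
        · exact absurd (sPerm_lt_sPerm hgt hc2) (asymm h2)
  · rintro (⟨h1, h2⟩ | ⟨h1, h2⟩)
    · have hx1 : w.symm p1 = fHi i := by rw [h1, Equiv.symm_apply_apply]
      have hy1 : w.symm p2 = fLo i := by rw [h2, Equiv.symm_apply_apply]
      refine ⟨?_, ?_⟩
      · rw [h1, h2]; exact h
      · rw [hx1, hy1, sPerm_fHi, sPerm_fLo]
        simp [Fin.lt_def, fLo_val, fHi_val]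
    · refine ⟨h1, ?_⟩
      apply sPerm_lt_sPerm h2
      rintro ⟨hxl, hyh⟩
      have e1 : p1 = w (fLo i) := by rw [← hxl, Equiv.apply_symm_apply]
      have e2 : p2 = w (fHi i) := by rw [← hyh, Equiv.apply_symm_apply]
      rw [e1, e2] at h1
      exact absurd h (not_lt.2 h1.le)

lemma notin_diagSet {w : Perm (Fin n)} {i : Fin (n-1)} (h : w (fLo i) < w (fHi i)) :
    (w (fHi i), w (fLo i)) ∉ diagSet w := by
  simp only [diagSet, Finset.mem_filter, Finset.mem_univ, true_and]
  rintro ⟨-, h2⟩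
  rw [Equiv.symm_apply_apply, Equiv.symm_apply_apply] at h2
  exact absurd h2 (by simp [Fin.lt_def, fLo_val, fHi_val])

lemma diagS {S : Perm (Fin n) → MvPolynomial (Fin n ⊕ Fin n) ℤ}
    (hS : SchubertFamily n S) :
    ∀ w : Perm (Fin n), specS w (S w) = ∏ p ∈ diagSet w, (X p.1 - X p.2) := by
  apply downward_induction
    (P := fun w => specS w (S w) = ∏ p ∈ diagSet w, (X p.1 - X p.2))
  · rw [hS.1, map_prod, diagSet_w0]
    apply Finset.prod_bij (i := fun p _ => ((w0 n) p.1, p.2))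
    · rintro ⟨p1, p2⟩ hp
      simp only [Finset.mem_filter, Finset.mem_univ, true_and] at hp ⊢
      show p2 < (w0 n) p1
      rw [w0_apply, Fin.lt_def, Fin.val_rev]
      have := p1.isLt
      omega
    · rintro ⟨p1, p2⟩ hp ⟨q1, q2⟩ hq he
      simp only [Prod.mk.injEq] at he ⊢
      exact ⟨(w0 n).injective he.1, he.2⟩
    · rintro ⟨q1, q2⟩ hq
      simp only [Finset.mem_filter, Finset.mem_univ, true_and] at hq
      refine ⟨(q1.rev, q2), ?_, ?_⟩
      · simp only [Finset.mem_filter, Finset.mem_univ, true_and]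
        rw [Fin.lt_def] at hq
        have h1 := q1.isLt
        have h2 := q2.isLt
        simp only [Fin.val_rev]
        omega
      · simp only [Prod.mk.injEq]
        refine ⟨by rw [w0_apply, Fin.rev_rev], by trivial⟩
    · rintro ⟨p1, p2⟩ hp
      rw [map_sub, specS_X_inl, specS_X_inr]
  · intro w hw ih
    obtain ⟨i, hi⟩ := (exists_nondescent_or_eq_w0 w).resolve_left hw
    have hPrev := ih i hi
    have hlen := len_mul_sPerm_of_lt hi
    have hdesc : len ((w * sPerm i) * sPerm i) < len (w * sPerm i) := by
      rw [mul_sPerm_mul_sPerm]; omega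
    have hstar := starS hS hdesc w
    rw [mul_sPerm_mul_sPerm] at hstar
    have h0 : specS w (S (w * sPerm i)) = 0 := triangularS hS _ _ (by omega)
    rw [h0, zero_sub] at hstar
    rw [hPrev, diagSet_mul_sPerm hi, Finset.prod_insert (notin_diagSet hi)] at hstar
    have hD : (X (w (fLo i)) - X (w (fHi i)) : MvPolynomial (Fin n) ℤ) ≠ 0 :=
      X_sub_X_ne_zero (apply_fLo_ne_fHi w i)
    apply mul_left_cancel₀ hD
    rw [hstar]
    ring

/-- the Billey-formula sum, by recursion on the reversed word -/
noncomputable def TSrev : List (Fin (n-1)) → Perm (Fin n) → MvPolynomial (Fin n) ℤ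
  | [], w => if w = 1 then 1 else 0
  | j :: r, w =>
    if len (w * sPerm j) < len w then
      TSrev r w + (X (wordProd r.reverse (fHi j)) - X (wordProd r.reverse (fLo j))) *
        TSrev r (w * sPerm j)
    else TSrev r w

noncomputable def TS (l : List (Fin (n-1))) (w : Perm (Fin n)) : MvPolynomial (Fin n) ℤ :=
  TSrev l.reverse w

lemma TS_nil (w : Perm (Fin n)) : TS [] w = if w = 1 then 1 else 0 := rfl

lemma TSrev_cons (j : Fin (n-1)) (r : List (Fin (n-1))) (w : Perm (Fin n)) :
    TSrev (j :: r) w =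
      if len (w * sPerm j) < len w then
        TSrev r w + (X (wordProd r.reverse (fHi j)) - X (wordProd r.reverse (fLo j))) *
          TSrev r (w * sPerm j)
      else TSrev r w := rfl

lemma TS_concat (l : List (Fin (n-1))) (j : Fin (n-1)) (w : Perm (Fin n)) :
    TS (l ++ [j]) w =
      if len (w * sPerm j) < len w then
        TS l w + (X (wordProd l (fHi j)) - X (wordProd l (fLo j))) * TS l (w * sPerm j)
      else TS l w := by
  unfold TS
  rw [List.reverse_append]
  show TSrev (j :: l.reverse) w = _
  rw [TSrev_cons, List.reverse_reverse]

/-- Billey's formula -/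
lemma billeyS {S : Perm (Fin n) → MvPolynomial (Fin n ⊕ Fin n) ℤ}
    (hS : SchubertFamily n S) :
    ∀ l : List (Fin (n-1)), len (wordProd l) = l.length →
      ∀ w : Perm (Fin n), specS (wordProd l) (S w) = TS l w := by
  intro l
  induction l using List.reverseRecOn with
  | nil =>
    intro _ w
    rw [wordProd_nil, TS_nil]
    by_cases hw : w = 1
    · rw [hw, if_pos rfl, diagS hS 1, diagSet_one, Finset.prod_empty]
    · rw [if_neg hw]
      apply triangularS hS
      rw [len_one]
      rcases Nat.eq_zero_or_pos (len w) with h | h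
      · exact absurd (len_eq_zero_iff.1 h) hw
      · exact h
  | append_singleton l j ih =>
    intro hred w
    obtain ⟨hredl, hnd⟩ := reduced_concat_peel hred
    have ihl := ih hredl
    set u := wordProd l with hu
    have hv : wordProd (l ++ [j]) = u * sPerm j := wordProd_concat l j
    have hulen := len_mul_sPerm_of_lt hnd
    -- formula for permutations with descent at j
    have desc_case : ∀ W : Perm (Fin n), len (W * sPerm j) < len W →
        specS (u * sPerm j) (S W) =
          TS l W + (X (u (fHi j)) - X (u (fLo j))) * TS l (W * sPerm j) := by
      intro W hW
      have hstar := starS hS hW u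
      have e1 : specS (u * sPerm j) (S W) =
          specS u (S W) - (X (u (fLo j)) - X (u (fHi j))) * specS u (S (W * sPerm j)) := by
        linear_combination hstar
      rw [e1, ihl W, ihl (W * sPerm j)]
      ring
    rw [hv, TS_concat]
    by_cases hdes : len (w * sPerm j) < len w
    · rw [if_pos hdes]
      exact desc_case w hdes
    · rw [if_neg hdes]
      -- w has no descent at j; W := w * sPerm j has one
      have hnd2 : len w < len (w * sPerm j) := by
        rcases lt_or_gt_of_ne (apply_fLo_ne_fHi w j) with h3 | h3
        · rw [len_mul_sPerm_of_lt h3]; omega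
        · exact absurd (by rw [descent_iff]; exact h3) hdes
      have hWdesc : len ((w * sPerm j) * sPerm j) < len (w * sPerm j) := by
        rw [mul_sPerm_mul_sPerm]; omega
      have hstar := starS hS hWdesc (u * sPerm j)
      rw [mul_sPerm_mul_sPerm, mul_sPerm_mul_sPerm] at hstar
      have hlo : (u * sPerm j) (fLo j) = u (fHi j) := by
        rw [Perm.mul_apply, sPerm_fLo]
      have hhi : (u * sPerm j) (fHi j) = u (fLo j) := by
        rw [Perm.mul_apply, sPerm_fHi]
      rw [hlo, hhi, desc_case (w * sPerm j) hWdesc, mul_sPerm_mul_sPerm, ihl (w * sPerm j)] at hstar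
      have hD : (X (u (fHi j)) - X (u (fLo j)) : MvPolynomial (Fin n) ℤ) ≠ 0 :=
        X_sub_X_ne_zero fun e => apply_fLo_ne_fHi u j e.symm
      apply mul_left_cancel₀ hD
      rw [hstar]
      ring

end BR

namespace BR

open MvPolynomial Equiv List

variable {n : ℕ}

/-- the existence of a reduced subword -/
def Qual (l : List (Fin (n-1))) (w : Perm (Fin n)) : Prop :=
  ∃ l' : List (Fin (n-1)), l'.Sublist l ∧ wordProd l' = w ∧ l'.length = len w

noncomputable def phiS : MvPolynomial (Fin n) ℤ →+* ℤ :=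
  eval (fun k : Fin n => (k.val : ℤ))

lemma phiS_X (k : Fin n) : phiS (X k) = (k.val : ℤ) := by simp [phiS]

lemma qual_nil_iff (w : Perm (Fin n)) : Qual [] w ↔ w = 1 := by
  constructor
  · rintro ⟨l', hsub, hprod, hlen⟩
    rw [List.sublist_nil] at hsub
    rw [hsub] at hprod
    exact hprod.symm ▸ rfl
  · rintro rfl
    exact ⟨[], List.Sublist.refl _, rfl, by rw [len_one]; rfl⟩

lemma qual_concat_iff (l : List (Fin (n-1))) (j : Fin (n-1)) (w : Perm (Fin n)) :
    Qual (l ++ [j]) w ↔ Qual l w ∨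
      (len (w * sPerm j) < len w ∧ Qual l (w * sPerm j)) := by
  constructor
  · rintro ⟨l', hsub, hprod, hlen⟩
    rw [List.sublist_append_iff] at hsub
    obtain ⟨l1, l2, rfl, h1, h2⟩ := hsub
    rw [List.sublist_singleton] at h2
    rcases h2 with rfl | rfl
    · left
      exact ⟨l1, by simpa using h1, by simpa using hprod, by simpa using hlen⟩
    · right
      rw [wordProd_concat] at hprod
      have hprod1 : wordProd l1 = w * sPerm j := by
        rw [← hprod, mul_sPerm_mul_sPerm]
      have hlen1 : l1.length + 1 = len w := by simpa using hlen
      have hle : len (w * sPerm j) ≤ l1.length := hprod1 ▸ len_le_of_word l1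
      have hdesc : len (w * sPerm j) < len w := by
        rcases lt_or_gt_of_ne (apply_fLo_ne_fHi w j) with h3 | h3
        · have := len_mul_sPerm_of_lt h3; omega
        · exact descent_iff.2 h3
      have hlen2 : l1.length = len (w * sPerm j) := by
        have := len_mul_sPerm_of_gt (descent_iff.1 hdesc)
        omega
      exact ⟨hdesc, l1, h1, hprod1, hlen2⟩
  · rintro (⟨l', hsub, hprod, hlen⟩ | ⟨hdesc, l', hsub, hprod, hlen⟩)
    · exact ⟨l', hsub.trans (List.sublist_append_left l [j]), hprod, hlen⟩
    · refine ⟨l' ++ [j], ?_, ?_, ?_⟩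
      · exact List.Sublist.append hsub (List.Sublist.refl [j])
      · rw [wordProd_concat, hprod, mul_sPerm_mul_sPerm]
      · have := len_mul_sPerm_of_gt (descent_iff.1 hdesc)
        simp [hlen]
        omega

lemma TS_props (l : List (Fin (n-1))) (hred : len (wordProd l) = l.length) :
    ∀ w : Perm (Fin n),
      (0 ≤ phiS (TS l w)) ∧ (Qual l w → 0 < phiS (TS l w)) ∧
        (¬ Qual l w → TS l w = 0) := by
  induction l using List.reverseRecOn with
  | nil =>
    intro w
    rw [TS_nil]
    by_cases hw : w = 1
    · rw [if_pos hw]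
      refine ⟨by simp, fun _ => by simp, fun hq => absurd ((qual_nil_iff w).2 hw) hq⟩
    · rw [if_neg hw]
      exact ⟨by simp, fun hq => absurd ((qual_nil_iff w).1 hq) hw, fun _ => rfl⟩
  | append_singleton l j ih =>
    intro w
    obtain ⟨hredl, hnd⟩ := reduced_concat_peel hred
    have ihl := ih hredl
    set u := wordProd l with hu
    have hwpos : 0 < phiS (X (u (fHi j)) - X (u (fLo j))) := by
      rw [map_sub, phiS_X, phiS_X]
      have : (u (fLo j)).val < (u (fHi j)).val := hnd
      omega
    rw [TS_concat]
    by_cases hdes : len (w * sPerm j) < len w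
    · rw [if_pos hdes]
      obtain ⟨ha1, ha2, ha3⟩ := ihl w
      obtain ⟨hb1, hb2, hb3⟩ := ihl (w * sPerm j)
      rw [map_add, map_mul]
      refine ⟨by positivity, ?_, ?_⟩
      · intro hq
        rcases (qual_concat_iff l j w).1 hq with hq1 | ⟨-, hq2⟩
        · exact add_pos_of_pos_of_nonneg (ha2 hq1) (mul_nonneg hwpos.le hb1)
        · exact add_pos_of_nonneg_of_pos ha1 (mul_pos hwpos (hb2 hq2))
      · intro hq
        rw [qual_concat_iff] at hq
        push_neg at hq
        rw [ha3 hq.1, hb3 (hq.2 hdes), mul_zero, add_zero]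
    · rw [if_neg hdes]
      obtain ⟨ha1, ha2, ha3⟩ := ihl w
      refine ⟨ha1, ?_, ?_⟩
      · intro hq
        rcases (qual_concat_iff l j w).1 hq with hq1 | ⟨hdesc, -⟩
        · exact ha2 hq1
        · exact absurd hdesc hdes
      · intro hq
        rw [qual_concat_iff] at hq
        push_neg at hq
        exact ha3 hq.1

lemma bruhat_iff_specS {S : Perm (Fin n) → MvPolynomial (Fin n ⊕ Fin n) ℤ}
    (hS : SchubertFamily n S) (v w : Perm (Fin n)) :
    bruhatLE w v ↔ specS v (S w) ≠ 0 := by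
  constructor
  · rintro ⟨l, l', ⟨hlv, hll⟩, hsub, hl'w, hl'l⟩
    have hred : len (wordProd l) = l.length := by rw [hlv, hll]
    have hb := billeyS hS l hred w
    rw [hlv] at hb
    rw [hb]
    intro h0
    have hq : Qual l w := ⟨l', hsub, hl'w, hl'l⟩
    have := ((TS_props l hred w).2.1) hq
    rw [h0, map_zero] at this
    exact lt_irrefl _ this
  · intro hne
    obtain ⟨l, hlv, hll⟩ := exists_reduced_word v
    have hred : len (wordProd l) = l.length := by rw [hlv, hll]
    have hb := billeyS hS l hred w
    rw [hlv] at hb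
    by_contra hc
    apply hne
    rw [hb]
    apply (TS_props l hred w).2.2
    rintro ⟨l', hsub, hl'w, hl'l⟩
    exact hc ⟨l, l', ⟨hlv, hll⟩, hsub, hl'w, hl'l⟩

end BR

namespace BR

open MvPolynomial Equiv List

variable {n : ℕ}

lemma varMon_le_nonZeroDivisors (σ : Type) :
    varMon σ ≤ nonZeroDivisors (MvPolynomial σ ℤ) := by
  rw [varMon, Submonoid.closure_le]
  rintro x ⟨s, rfl⟩
  exact mem_nonZeroDivisors_of_ne_zero (MvPolynomial.X_ne_zero s)

noncomputable instance laurentDomain (σ : Type) : IsDomain (LaurentMv σ) :=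
  IsLocalization.isDomain_of_le_nonZeroDivisors (M := varMon σ) (LaurentMv σ)
    (varMon_le_nonZeroDivisors σ)

lemma algebraMap_laurent_injective (σ : Type) :
    Function.Injective (algebraMap (MvPolynomial σ ℤ) (LaurentMv σ)) :=
  IsLocalization.injective (LaurentMv σ) (varMon_le_nonZeroDivisors σ)

lemma Xu_ne_zero {σ : Type} (s : σ) : (Xu s : LaurentMv σ) ≠ 0 := by
  intro h
  have := algebraMap_laurent_injective σ (h.trans (map_zero _).symm)
  exact MvPolynomial.X_ne_zero s this

lemma Xu_sub_Xu_ne_zero {σ : Type} {a b : σ} (h : a ≠ b) :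
    (Xu a - Xu b : LaurentMv σ) ≠ 0 := by
  intro he
  have h2 : Xu a = (Xu b : LaurentMv σ) := by
    have := sub_eq_zero.1 he; exact this
  have := algebraMap_laurent_injective σ h2
  exact h (MvPolynomial.X_injective this)

lemma Xu_mul_XuInv {σ : Type} (s : σ) : (Xu s : LaurentMv σ) * XuInv s = 1 := by
  rw [Xu, XuInv, ← Localization.mk_one_eq_algebraMap, Localization.mk_mul]
  rw [mul_one, one_mul]
  exact Localization.mk_self (⟨MvPolynomial.X s, Submonoid.subset_closure ⟨s, rfl⟩⟩ : varMon σ)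

lemma eq_of_mul_eq_one' {A : Type*} [CommMonoid A] {u x y : A}
    (hx : u * x = 1) (hy : u * y = 1) : x = y := by
  calc x = x * (u * y) := by rw [hy, mul_one]
  _ = (u * x) * y := by rw [← mul_assoc, mul_comm x u]
  _ = y := by rw [hx, one_mul]

lemma substLaurent_Xu {σ τ : Type} (f : σ → LaurentMv τ) (hf : ∀ s, IsUnit (f s)) (s : σ) :
    substLaurent f hf (Xu s) = f s := by
  rw [Xu, substLaurent, IsLocalization.lift_eq]
  simp

lemma specG_Xu_inl (v : Perm (Fin n)) (j : Fin n) :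
    specG v (Xu (Sum.inl j)) = Xu (v j) := by
  rw [specG, substLaurent_Xu]; rfl

lemma specG_Xu_inr (v : Perm (Fin n)) (j : Fin n) :
    specG v (Xu (Sum.inr j)) = Xu j := by
  rw [specG, substLaurent_Xu]; rfl

lemma laurent_hom_ext {σ : Type} {A : Type*} [CommRing A] {f g : LaurentMv σ →+* A}
    (h : ∀ s, f (Xu s) = g (Xu s)) : f = g := by
  apply IsLocalization.ringHom_ext (varMon σ)
  apply MvPolynomial.ringHom_ext
  · intro r
    have he : (f.comp (algebraMap (MvPolynomial σ ℤ) (LaurentMv σ))).comp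
        (C : ℤ →+* MvPolynomial σ ℤ) =
        (g.comp (algebraMap (MvPolynomial σ ℤ) (LaurentMv σ))).comp
        (C : ℤ →+* MvPolynomial σ ℤ) := by
      apply RingHom.ext_int
    exact RingHom.congr_fun he r
  · intro s
    exact h s

lemma specG_sActL (v : Perm (Fin n)) (i : Fin (n-1)) (x : LaurentMv (Fin n ⊕ Fin n)) :
    specG v (sActL i x) = specG (v * sPerm i) x := by
  have he : (specG v).comp (sActL i) = specG (v * sPerm i) := by
    apply laurent_hom_ext
    intro s
    rw [RingHom.comp_apply]
    rw [show sActL i (Xu s) = Xu (Equiv.sumCongr (sPerm i) (Equiv.refl (Fin n)) s) from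
      substLaurent_Xu _ _ s]
    cases s with
    | inl j =>
      rw [specG_Xu_inl]
      show specG v (Xu (Sum.inl (sPerm i j))) = _
      rw [specG_Xu_inl, Perm.mul_apply]
    | inr j =>
      show specG v (Xu (Sum.inr j)) = specG (v * sPerm i) (Xu (Sum.inr j))
      rw [specG_Xu_inr, specG_Xu_inr]
  exact RingHom.congr_fun he x

lemma starG {G : Perm (Fin n) → LaurentMv (Fin n ⊕ Fin n)}
    (hG : GrothFamily n G) {w : Perm (Fin n)} {i : Fin (n-1)}
    (h : len (w * sPerm i) < len w) (v : Perm (Fin n)) :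
    (Xu (v (fLo i)) - Xu (v (fHi i))) * specG v (G (w * sPerm i)) =
      Xu (v (fLo i)) * specG v (G w) -
        Xu (v (fHi i)) * specG (v * sPerm i) (G w) := by
  have := congrArg (specG v) (hG.2 w i h)
  rw [map_mul, map_sub, map_sub, map_mul, map_mul, specG_Xu_inl, specG_Xu_inl,
    specG_sActL] at this
  exact this

lemma triangularG {G : Perm (Fin n) → LaurentMv (Fin n ⊕ Fin n)}
    (hG : GrothFamily n G) :
    ∀ w v : Perm (Fin n), len v < len w → specG v (G w) = 0 := by
  apply downward_induction
    (P := fun w => ∀ v : Perm (Fin n), len v < len w → specG v (G w) = 0)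
  · intro v hv
    have hvne : v ≠ w0 n := fun e => by rw [e] at hv; exact lt_irrefl _ hv
    obtain ⟨a, ha⟩ := exists_zero_pair hvne
    rw [hG.1, map_prod]
    apply Finset.prod_eq_zero (i := (a, v a))
    · simp only [Finset.mem_filter, Finset.mem_univ, true_and]
      exact ha
    · rw [map_sub, map_one, map_mul, specG_Xu_inr]
      have hinv : specG v (XuInv (Sum.inl a)) = XuInv (v a) := by
        apply eq_of_mul_eq_one' (u := Xu (v a))
        · rw [← specG_Xu_inl v a, ← map_mul, Xu_mul_XuInv, map_one]
        · exact Xu_mul_XuInv _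
      rw [hinv]
      rw [Xu_mul_XuInv, sub_self]
  · intro w hw ih v hv
    obtain ⟨i, hi⟩ := (exists_nondescent_or_eq_w0 w).resolve_left hw
    have hlen := len_mul_sPerm_of_lt hi
    have hdesc : len ((w * sPerm i) * sPerm i) < len (w * sPerm i) := by
      rw [mul_sPerm_mul_sPerm]; omega
    have hstar := starG hG hdesc v
    rw [mul_sPerm_mul_sPerm] at hstar
    have h1 : specG v (G (w * sPerm i)) = 0 := ih i hi v (by omega)
    have h2 : specG (v * sPerm i) (G (w * sPerm i)) = 0 := by
      apply ih i hi
      rcases lt_or_gt_of_ne (apply_fLo_ne_fHi v i) with h3 | h3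
      · rw [len_mul_sPerm_of_lt h3]; omega
      · have := len_mul_sPerm_of_gt h3; omega
    rw [h1, h2, mul_zero, mul_zero, sub_zero] at hstar
    have hD : (Xu (v (fLo i)) - Xu (v (fHi i)) : LaurentMv (Fin n)) ≠ 0 :=
      Xu_sub_Xu_ne_zero (apply_fLo_ne_fHi v i)
    exact (mul_eq_zero.1 hstar).resolve_left hD

lemma diagG {G : Perm (Fin n) → LaurentMv (Fin n ⊕ Fin n)}
    (hG : GrothFamily n G) :
    ∀ w : Perm (Fin n), specG w (G w) =
      ∏ p ∈ diagSet w, (1 - Xu p.2 * XuInv p.1) := by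
  apply downward_induction
    (P := fun w => specG w (G w) = ∏ p ∈ diagSet w, (1 - Xu p.2 * XuInv p.1))
  · rw [hG.1, map_prod, diagSet_w0]
    apply Finset.prod_bij (i := fun p _ => ((w0 n) p.1, p.2))
    · rintro ⟨p1, p2⟩ hp
      simp only [Finset.mem_filter, Finset.mem_univ, true_and] at hp ⊢
      show p2 < (w0 n) p1
      rw [w0_apply, Fin.lt_def, Fin.val_rev]
      have := p1.isLt
      omega
    · rintro ⟨p1, p2⟩ hp ⟨q1, q2⟩ hq he
      simp only [Prod.mk.injEq] at he ⊢
      exact ⟨(w0 n).injective he.1, he.2⟩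
    · rintro ⟨q1, q2⟩ hq
      simp only [Finset.mem_filter, Finset.mem_univ, true_and] at hq
      refine ⟨(q1.rev, q2), ?_, ?_⟩
      · simp only [Finset.mem_filter, Finset.mem_univ, true_and]
        rw [Fin.lt_def] at hq
        have h1 := q1.isLt
        have h2 := q2.isLt
        simp only [Fin.val_rev]
        omega
      · simp only [Prod.mk.injEq]
        refine ⟨by rw [w0_apply, Fin.rev_rev], by trivial⟩
    · rintro ⟨p1, p2⟩ hp
      rw [map_sub, map_one, map_mul, specG_Xu_inr]
      have hinv : specG (w0 n) (XuInv (Sum.inl p1)) = XuInv ((w0 n) p1) := by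
        apply eq_of_mul_eq_one' (u := Xu ((w0 n) p1))
        · rw [← specG_Xu_inl (w0 n) p1, ← map_mul, Xu_mul_XuInv, map_one]
        · exact Xu_mul_XuInv _
      rw [hinv]
  · intro w hw ih
    obtain ⟨i, hi⟩ := (exists_nondescent_or_eq_w0 w).resolve_left hw
    have hPrev := ih i hi
    have hlen := len_mul_sPerm_of_lt hi
    have hdesc : len ((w * sPerm i) * sPerm i) < len (w * sPerm i) := by
      rw [mul_sPerm_mul_sPerm]; omega
    have hstar := starG hG hdesc w
    rw [mul_sPerm_mul_sPerm] at hstar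
    have h0 : specG w (G (w * sPerm i)) = 0 := triangularG hG _ _ (by omega)
    rw [h0, mul_zero, zero_sub, hPrev, diagSet_mul_sPerm hi,
      Finset.prod_insert (notin_diagSet hi)] at hstar
    have hD : (Xu (w (fLo i)) - Xu (w (fHi i)) : LaurentMv (Fin n)) ≠ 0 :=
      Xu_sub_Xu_ne_zero (apply_fLo_ne_fHi w i)
    apply mul_left_cancel₀ hD
    rw [hstar]
    have hinv : Xu (w (fHi i)) * XuInv (w (fHi i)) = (1 : LaurentMv (Fin n)) :=
      Xu_mul_XuInv _
    set P := ∏ p ∈ diagSet w, (1 - Xu p.2 * XuInv p.1 : LaurentMv (Fin n))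
    linear_combination Xu (w (fLo i)) * P * hinv

/-- the Grothendieck Billey-type sum -/
noncomputable def TGrev : List (Fin (n-1)) → Perm (Fin n) → LaurentMv (Fin n)
  | [], w => if w = 1 then 1 else 0
  | j :: r, w =>
    if len (w * sPerm j) < len w then
      Xu (wordProd r.reverse (fLo j)) * XuInv (wordProd r.reverse (fHi j)) * TGrev r w +
        (1 - Xu (wordProd r.reverse (fLo j)) * XuInv (wordProd r.reverse (fHi j))) *
          TGrev r (w * sPerm j)
    else TGrev r w

noncomputable def TG (l : List (Fin (n-1))) (w : Perm (Fin n)) : LaurentMv (Fin n) :=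
  TGrev l.reverse w

lemma TG_nil (w : Perm (Fin n)) : TG [] w = if w = 1 then 1 else 0 := rfl

lemma TGrev_cons (j : Fin (n-1)) (r : List (Fin (n-1))) (w : Perm (Fin n)) :
    TGrev (j :: r) w =
      if len (w * sPerm j) < len w then
        Xu (wordProd r.reverse (fLo j)) * XuInv (wordProd r.reverse (fHi j)) * TGrev r w +
          (1 - Xu (wordProd r.reverse (fLo j)) * XuInv (wordProd r.reverse (fHi j))) *
            TGrev r (w * sPerm j)
      else TGrev r w := rfl

lemma TG_concat (l : List (Fin (n-1))) (j : Fin (n-1)) (w : Perm (Fin n)) :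
    TG (l ++ [j]) w =
      if len (w * sPerm j) < len w then
        Xu (wordProd l (fLo j)) * XuInv (wordProd l (fHi j)) * TG l w +
          (1 - Xu (wordProd l (fLo j)) * XuInv (wordProd l (fHi j))) * TG l (w * sPerm j)
      else TG l w := by
  unfold TG
  rw [List.reverse_append]
  show TGrev (j :: l.reverse) w = _
  rw [TGrev_cons, List.reverse_reverse]

lemma billeyG {G : Perm (Fin n) → LaurentMv (Fin n ⊕ Fin n)}
    (hG : GrothFamily n G) :
    ∀ l : List (Fin (n-1)), len (wordProd l) = l.length →
      ∀ w : Perm (Fin n), specG (wordProd l) (G w) = TG l w := by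
  intro l
  induction l using List.reverseRecOn with
  | nil =>
    intro _ w
    rw [wordProd_nil, TG_nil]
    by_cases hw : w = 1
    · rw [hw, if_pos rfl, diagG hG 1, diagSet_one, Finset.prod_empty]
    · rw [if_neg hw]
      apply triangularG hG
      rw [len_one]
      rcases Nat.eq_zero_or_pos (len w) with h | h
      · exact absurd (len_eq_zero_iff.1 h) hw
      · exact h
  | append_singleton l j ih =>
    intro hred w
    obtain ⟨hredl, hnd⟩ := reduced_concat_peel hred
    have ihl := ih hredl
    set u := wordProd l with hu
    have hv : wordProd (l ++ [j]) = u * sPerm j := wordProd_concat l j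
    have hulen := len_mul_sPerm_of_lt hnd
    have hinv : Xu (u (fHi j)) * XuInv (u (fHi j)) = (1 : LaurentMv (Fin n)) :=
      Xu_mul_XuInv _
    have hXne : (Xu (u (fHi j)) : LaurentMv (Fin n)) ≠ 0 := Xu_ne_zero _
    have desc_case : ∀ W : Perm (Fin n), len (W * sPerm j) < len W →
        specG (u * sPerm j) (G W) =
          Xu (u (fLo j)) * XuInv (u (fHi j)) * TG l W +
            (1 - Xu (u (fLo j)) * XuInv (u (fHi j))) * TG l (W * sPerm j) := by
      intro W hW
      have hstar := starG hG hW u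
      rw [ihl W, ihl (W * sPerm j)] at hstar
      apply mul_left_cancel₀ hXne
      linear_combination hstar + (TG l (W * sPerm j) - TG l W) * Xu (u (fLo j)) * hinv
    rw [hv, TG_concat]
    by_cases hdes : len (w * sPerm j) < len w
    · rw [if_pos hdes]
      exact desc_case w hdes
    · rw [if_neg hdes]
      have hnd2 : len w < len (w * sPerm j) := by
        rcases lt_or_gt_of_ne (apply_fLo_ne_fHi w j) with h3 | h3
        · rw [len_mul_sPerm_of_lt h3]; omega
        · exact absurd (by rw [descent_iff]; exact h3) hdes
      have hWdesc : len ((w * sPerm j) * sPerm j) < len (w * sPerm j) := by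
        rw [mul_sPerm_mul_sPerm]; omega
      have hstar := starG hG hWdesc (u * sPerm j)
      rw [mul_sPerm_mul_sPerm, mul_sPerm_mul_sPerm] at hstar
      have hlo : (u * sPerm j) (fLo j) = u (fHi j) := by
        rw [Perm.mul_apply, sPerm_fLo]
      have hhi : (u * sPerm j) (fHi j) = u (fLo j) := by
        rw [Perm.mul_apply, sPerm_fHi]
      rw [hlo, hhi, desc_case (w * sPerm j) hWdesc, mul_sPerm_mul_sPerm,
        ihl (w * sPerm j)] at hstar
      have hD : (Xu (u (fHi j)) - Xu (u (fLo j)) : LaurentMv (Fin n)) ≠ 0 :=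
        Xu_sub_Xu_ne_zero fun e => apply_fLo_ne_fHi u j e.symm
      apply mul_left_cancel₀ hD
      linear_combination hstar + (TG l (w * sPerm j) - TG l w) * Xu (u (fLo j)) * hinv

end BR

namespace BR

open MvPolynomial Equiv List

variable {n : ℕ}

noncomputable def psiPoly : MvPolynomial (Fin n) ℤ →+* ℚ :=
  eval₂Hom (Int.castRingHom ℚ) (fun k => (2 : ℚ) ^ (k.val))

lemma psiPoly_X (k : Fin n) : psiPoly (X k) = (2 : ℚ) ^ (k.val) := by
  simp [psiPoly]

lemma psiPoly_units : ∀ y ∈ varMon (Fin n), IsUnit (psiPoly y) := by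
  intro y hy
  induction hy using Submonoid.closure_induction with
  | mem x hx =>
    obtain ⟨s, rfl⟩ := hx
    rw [psiPoly_X]
    exact isUnit_iff_ne_zero.2 (by positivity)
  | one => simp
  | mul x y _ _ hx hy => rw [map_mul]; exact hx.mul hy

noncomputable def psiG : LaurentMv (Fin n) →+* ℚ :=
  IsLocalization.lift (M := varMon (Fin n)) (S := LaurentMv (Fin n))
    (g := psiPoly) (fun ⟨y, hy⟩ => psiPoly_units y hy)

lemma psiG_Xu (k : Fin n) : psiG (Xu k) = (2 : ℚ) ^ (k.val) := by
  rw [Xu, psiG, IsLocalization.lift_eq, psiPoly_X]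

lemma psiG_XuInv (k : Fin n) : psiG (XuInv k) = ((2 : ℚ) ^ (k.val))⁻¹ := by
  have h1 : psiG (Xu k) * psiG (XuInv k) = 1 := by
    rw [← map_mul, Xu_mul_XuInv, map_one]
  rw [psiG_Xu] at h1
  field_simp at h1 ⊢
  linarith [h1]

lemma psiG_weight_pos {a b : Fin n} (h : a < b) :
    0 < psiG (Xu a * XuInv b) ∧ psiG (Xu a * XuInv b) < 1 := by
  rw [map_mul, psiG_Xu, psiG_XuInv]
  have h2 : (0:ℚ) < 2 ^ (a.val) := by positivity
  have h3 : (0:ℚ) < 2 ^ (b.val) := by positivity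
  have h4 : (2:ℚ) ^ (a.val) < 2 ^ (b.val) := by
    apply pow_lt_pow_right₀ one_lt_two
    exact h
  constructor
  · positivity
  · rw [mul_inv_lt_iff₀ h3, one_mul]
    exact h4

lemma TG_props {G : Perm (Fin n) → LaurentMv (Fin n ⊕ Fin n)}
    (l : List (Fin (n-1))) (hred : len (wordProd l) = l.length) :
    ∀ w : Perm (Fin n),
      (0 ≤ psiG (TG l w)) ∧ (Qual l w → 0 < psiG (TG l w)) ∧
        (¬ Qual l w → TG l w = 0) := by
  induction l using List.reverseRecOn with
  | nil =>
    intro w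
    rw [TG_nil]
    by_cases hw : w = 1
    · rw [if_pos hw]
      refine ⟨by simp, fun _ => by simp, fun hq => absurd ((qual_nil_iff w).2 hw) hq⟩
    · rw [if_neg hw]
      exact ⟨by simp, fun hq => absurd ((qual_nil_iff w).1 hq) hw, fun _ => rfl⟩
  | append_singleton l j ih =>
    intro w
    obtain ⟨hredl, hnd⟩ := reduced_concat_peel hred
    have ihl := ih hredl
    set u := wordProd l with hu
    obtain ⟨hq1, hq2⟩ := psiG_weight_pos hnd
    set q := Xu (u (fLo j)) * XuInv (u (fHi j)) with hq
    have hcompl : 0 < psiG (1 - q) := by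
      rw [map_sub, map_one]
      linarith
    rw [TG_concat, ← hu, ← hq]
    clear_value q
    by_cases hdes : len (w * sPerm j) < len w
    · rw [if_pos hdes]
      obtain ⟨ha1, ha2, ha3⟩ := ihl w
      obtain ⟨hb1, hb2, hb3⟩ := ihl (w * sPerm j)
      rw [map_add, map_mul, map_mul]
      refine ⟨?_, ?_, ?_⟩
      · have := mul_nonneg hq1.le ha1
        have := mul_nonneg hcompl.le hb1
        linarith
      · intro hqq
        rcases (qual_concat_iff l j w).1 hqq with hc1 | ⟨-, hc2⟩
        · have := mul_pos hq1 (ha2 hc1)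
          have := mul_nonneg hcompl.le hb1
          linarith
        · have := mul_nonneg hq1.le ha1
          have := mul_pos hcompl (hb2 hc2)
          linarith
      · intro hqq
        rw [qual_concat_iff] at hqq
        push_neg at hqq
        rw [ha3 hqq.1, hb3 (hqq.2 hdes), mul_zero, mul_zero, add_zero]
    · rw [if_neg hdes]
      obtain ⟨ha1, ha2, ha3⟩ := ihl w
      refine ⟨ha1, ?_, ?_⟩
      · intro hqq
        rcases (qual_concat_iff l j w).1 hqq with hc1 | ⟨hdesc, -⟩
        · exact ha2 hc1
        · exact absurd hdesc hdes
      · intro hqq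
        rw [qual_concat_iff] at hqq
        push_neg at hqq
        exact ha3 hqq.1

lemma bruhat_iff_specG {G : Perm (Fin n) → LaurentMv (Fin n ⊕ Fin n)}
    (hG : GrothFamily n G) (v w : Perm (Fin n)) :
    bruhatLE w v ↔ specG v (G w) ≠ 0 := by
  constructor
  · rintro ⟨l, l', ⟨hlv, hll⟩, hsub, hl'w, hl'l⟩
    have hred : len (wordProd l) = l.length := by rw [hlv, hll]
    have hb := billeyG hG l hred w
    rw [hlv] at hb
    rw [hb]
    intro h0
    have hq : Qual l w := ⟨l', hsub, hl'w, hl'l⟩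
    have := ((TG_props (G := G) l hred w).2.1) hq
    rw [h0, map_zero] at this
    exact lt_irrefl _ this
  · intro hne
    obtain ⟨l, hlv, hll⟩ := exists_reduced_word v
    have hred : len (wordProd l) = l.length := by rw [hlv, hll]
    have hb := billeyG hG l hred w
    rw [hlv] at hb
    by_contra hc
    apply hne
    rw [hb]
    apply (TG_props (G := G) l hred w).2.2
    rintro ⟨l', hsub, hl'w, hl'l⟩
    exact hc ⟨l, l', ⟨hlv, hll⟩, hsub, hl'w, hl'l⟩

end BR


/-- **Characterization of the Bruhat order** (Goldin; Buch-Rimányi, Cor. 2):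
`w ≤ v` in Bruhat order iff `𝔖_w(y_v;y) ≠ 0` iff `𝔊_w(b_v;b) ≠ 0`. -/
theorem bruhat_iff_specialization_ne_zero (n : ℕ) (hn : 1 ≤ n) (v w : Equiv.Perm (Fin n))
    (S : Equiv.Perm (Fin n) → MvPolynomial (Fin n ⊕ Fin n) ℤ) (hS : SchubertFamily n S)
    (G : Equiv.Perm (Fin n) → LaurentMv (Fin n ⊕ Fin n)) (hG : GrothFamily n G) :
    (bruhatLE w v ↔ specS v (S w) ≠ 0) ∧ (bruhatLE w v ↔ specG v (G w) ≠ 0) := by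
  exact ⟨BR.bruhat_iff_specS hS v w, BR.bruhat_iff_specG hG v w⟩
end

section
/- Let n ≥ 1 and v ∈ S_n. Then 𝔊_v(b_v; b) = ∏_{(i,j) ∈ C(D_v)} (1 − b_i/b_{v(j)}); i.e. the specialization of the double Grothendieck polynomial of v at a = b_v is a product of linear factors indexed by the crossing positions of the diagram D_v. -/
set_option maxHeartbeats 1000000
set_option synthInstance.maxHeartbeats 400000

open MvPolynomial

/-- The set of crossing positions `C(D_v)` of the diagram of `v`
(0-based coordinates). -/
def CD {n : ℕ} (v : Equiv.Perm (Fin n)) : Finset (Fin n × Fin n) :=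
  Finset.univ.filter fun p => p.1 < v p.2 ∧ p.2 < v⁻¹ p.1

/-- `ν(i,j) = j + #{k > j : v(k) < i}`, as a 1-based index
(our coordinates being 0-based, this is `p.2 + 1 + #{...}`). -/
def nu {n : ℕ} (v : Equiv.Perm (Fin n)) (p : Fin n × Fin n) : ℕ :=
  p.2.val + 1 + (Finset.univ.filter fun k => p.2 < k ∧ v k < p.1).card

/-- All positions listed in south-west to north-east order:
`(i,j)` precedes `(i',j')` iff `j < j'`, or `j = j'` and `i > i'`. -/
def swneAll (n : ℕ) : List (Fin n × Fin n) :=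
  (List.finRange n).flatMap fun j => (List.finRange n).reverse.map fun i => (i, j)

namespace GrothAux

open Finset

/-! ### Basic facts about `sPerm`, `fLo`, `fHi` -/

lemma fLo_val {n : ℕ} (i : Fin (n-1)) : (fLo i).val = i.val := rfl

lemma fHi_val {n : ℕ} (i : Fin (n-1)) : (fHi i).val = i.val + 1 := rfl

lemma fLo_lt_fHi {n : ℕ} (i : Fin (n-1)) : fLo i < fHi i := by
  rw [Fin.lt_def, fLo_val, fHi_val]; omega

lemma fLo_ne_fHi {n : ℕ} (i : Fin (n-1)) : fLo i ≠ fHi i := by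
  intro e
  have := congrArg Fin.val e
  rw [fLo_val, fHi_val] at this
  omega

lemma sPerm_fLo {n : ℕ} (i : Fin (n-1)) : sPerm i (fLo i) = fHi i :=
  Equiv.swap_apply_left _ _

lemma sPerm_fHi {n : ℕ} (i : Fin (n-1)) : sPerm i (fHi i) = fLo i :=
  Equiv.swap_apply_right _ _

lemma sPerm_fix {n : ℕ} (i : Fin (n-1)) (x : Fin n) (h1 : x ≠ fLo i) (h2 : x ≠ fHi i) :
    sPerm i x = x :=
  Equiv.swap_apply_of_ne_of_ne h1 h2

lemma sPerm_sPerm {n : ℕ} (i : Fin (n-1)) (x : Fin n) : sPerm i (sPerm i x) = x :=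
  Equiv.swap_apply_self _ _ _

lemma sPerm_mul_self {n : ℕ} (i : Fin (n-1)) : sPerm i * sPerm i = 1 :=
  Equiv.swap_mul_self _ _

lemma mul_sPerm_sPerm {n : ℕ} (w : Equiv.Perm (Fin n)) (i : Fin (n-1)) :
    w * sPerm i * sPerm i = w := by
  rw [mul_assoc, sPerm_mul_self, mul_one]

lemma sPerm_inv {n : ℕ} (i : Fin (n-1)) : (sPerm i)⁻¹ = sPerm i :=
  Equiv.swap_inv _ _

lemma sPerm_val {n : ℕ} (i : Fin (n-1)) (x : Fin n) :
    (sPerm i x).val = if x.val = i.val then i.val + 1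
      else if x.val = i.val + 1 then i.val else x.val := by
  rcases eq_or_ne x.val i.val with h1 | h1
  · rw [if_pos h1]
    have hx : x = fLo i := Fin.val_injective (by rw [fLo_val]; exact h1)
    rw [hx, sPerm_fLo, fHi_val]
  · rw [if_neg h1]
    rcases eq_or_ne x.val (i.val + 1) with h2 | h2
    · rw [if_pos h2]
      have hx : x = fHi i := Fin.val_injective (by rw [fHi_val]; exact h2)
      rw [hx, sPerm_fHi, fLo_val]
    · rw [if_neg h2, sPerm_fix i x
        (fun e => h1 (by rw [← fLo_val i, e])) (fun e => h2 (by rw [← fHi_val i, e]))]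

lemma sPerm_lt_sPerm {n : ℕ} (i : Fin (n-1)) {x y : Fin n} (h : x < y)
    (hq : ¬(x.val = i.val ∧ y.val = i.val + 1)) : sPerm i x < sPerm i y := by
  have hx := sPerm_val i x
  have hy := sPerm_val i y
  rw [Fin.lt_def] at h ⊢
  split_ifs at hx hy <;> omega

/-! ### Inversions and length -/

noncomputable def invSet {n : ℕ} (w : Equiv.Perm (Fin n)) : Finset (Fin n × Fin n) :=
  Finset.univ.filter fun p => p.1 < p.2 ∧ w p.2 < w p.1

noncomputable def invNum {n : ℕ} (w : Equiv.Perm (Fin n)) : ℕ := (invSet w).card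

lemma mem_invSet {n : ℕ} {w : Equiv.Perm (Fin n)} {p : Fin n × Fin n} :
    p ∈ invSet w ↔ p.1 < p.2 ∧ w p.2 < w p.1 := by
  simp [invSet]

lemma invNum_one {n : ℕ} : invNum (1 : Equiv.Perm (Fin n)) = 0 := by
  rw [invNum, Finset.card_eq_zero, Finset.eq_empty_iff_forall_notMem]
  intro p hp
  rw [mem_invSet] at hp
  simp only [Equiv.Perm.one_apply] at hp
  exact absurd (hp.1.trans hp.2) (lt_irrefl _)

lemma invSet_erase_card {n : ℕ} (w : Equiv.Perm (Fin n)) (i : Fin (n-1)) :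
    ((invSet (w * sPerm i)).erase (fLo i, fHi i)).card
      = ((invSet w).erase (fLo i, fHi i)).card := by
  have hne : ∀ (p : Fin n × Fin n), p ≠ (fLo i, fHi i) →
      ¬(p.1.val = i.val ∧ p.2.val = i.val + 1) := by
    rintro p hp ⟨e1, e2⟩
    exact hp (Prod.ext (Fin.val_injective (by rw [fLo_val]; exact e1))
      (Fin.val_injective (by rw [fHi_val]; exact e2)))
  have hswapne : ∀ (p : Fin n × Fin n), p.1 < p.2 →
      (sPerm i p.1, sPerm i p.2) ≠ (fLo i, fHi i) := by
    intro p hlt he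
    have e1 : sPerm i p.1 = fLo i := congrArg Prod.fst he
    have e2 : sPerm i p.2 = fHi i := congrArg Prod.snd he
    have f1 : p.1 = fHi i := by
      have := congrArg (sPerm i) e1; rwa [sPerm_sPerm, sPerm_fLo] at this
    have f2 : p.2 = fLo i := by
      have := congrArg (sPerm i) e2; rwa [sPerm_sPerm, sPerm_fHi] at this
    rw [f1, f2] at hlt
    exact absurd hlt (lt_asymm (fLo_lt_fHi i))
  apply Finset.card_nbij' (i := fun p => (sPerm i p.1, sPerm i p.2))
    (j := fun p => (sPerm i p.1, sPerm i p.2))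
  · intro p hp
    rw [Finset.mem_coe, Finset.mem_erase, mem_invSet] at hp
    obtain ⟨hpq, h12, hw⟩ := hp
    rw [Finset.mem_coe, Finset.mem_erase, mem_invSet]
    refine ⟨hswapne p h12, sPerm_lt_sPerm i h12 (hne p hpq), ?_⟩
    simpa only [Equiv.Perm.mul_apply] using hw
  · intro p hp
    rw [Finset.mem_coe, Finset.mem_erase, mem_invSet] at hp
    obtain ⟨hpq, h12, hw⟩ := hp
    rw [Finset.mem_coe, Finset.mem_erase, mem_invSet]
    refine ⟨hswapne p h12, sPerm_lt_sPerm i h12 (hne p hpq), ?_⟩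
    simp only [Equiv.Perm.mul_apply, sPerm_sPerm]
    exact hw
  · intro p _; simp [sPerm_sPerm]
  · intro p _; simp [sPerm_sPerm]

lemma invNum_mul_sPerm_of_ascent {n : ℕ} (w : Equiv.Perm (Fin n)) (i : Fin (n-1))
    (h : w (fLo i) < w (fHi i)) : invNum (w * sPerm i) = invNum w + 1 := by
  have hin : (fLo i, fHi i) ∈ invSet (w * sPerm i) := by
    rw [mem_invSet]
    refine ⟨fLo_lt_fHi i, ?_⟩
    simpa only [Equiv.Perm.mul_apply, sPerm_fLo, sPerm_fHi] using h
  have hout : (fLo i, fHi i) ∉ invSet w := by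
    rw [mem_invSet]; rintro ⟨-, h2⟩; exact absurd (h.trans h2) (lt_irrefl _)
  have hcard := invSet_erase_card w i
  rw [Finset.card_erase_of_mem hin, Finset.erase_eq_of_notMem hout] at hcard
  have hpos : 0 < (invSet (w * sPerm i)).card := Finset.card_pos.mpr ⟨_, hin⟩
  unfold invNum
  omega

lemma invNum_mul_sPerm_of_descent {n : ℕ} (w : Equiv.Perm (Fin n)) (i : Fin (n-1))
    (h : w (fHi i) < w (fLo i)) : invNum (w * sPerm i) + 1 = invNum w := by
  have h2 : (w * sPerm i) (fLo i) < (w * sPerm i) (fHi i) := by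
    simpa only [Equiv.Perm.mul_apply, sPerm_fLo, sPerm_fHi] using h
  have := invNum_mul_sPerm_of_ascent (w * sPerm i) i h2
  rw [mul_sPerm_sPerm] at this
  omega

lemma invNum_mul_sPerm_le {n : ℕ} (w : Equiv.Perm (Fin n)) (i : Fin (n-1)) :
    invNum (w * sPerm i) ≤ invNum w + 1 := by
  rcases lt_trichotomy (w (fLo i)) (w (fHi i)) with h | h | h
  · rw [invNum_mul_sPerm_of_ascent w i h]
  · exact absurd (w.injective h) (fLo_ne_fHi i)
  · have := invNum_mul_sPerm_of_descent w i h
    omega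

/-! ### Monotonicity and extремal permutations -/

lemma perm_eq_of_pointwise_le {n : ℕ} (w g : Equiv.Perm (Fin n))
    (h : ∀ x, (g x).val ≤ (w x).val) : w = g := by
  have hsum : ∑ x : Fin n, (g x).val = ∑ x : Fin n, (w x).val := by
    rw [Equiv.sum_comp g (fun y : Fin n => (y.val : ℕ)),
      Equiv.sum_comp w (fun y : Fin n => (y.val : ℕ))]
  have heq := (Finset.sum_eq_sum_iff_of_le (fun x _ => h x)).mp hsum
  ext x
  exact (heq x (Finset.mem_univ x)).symm

lemma eq_one_of_ascents {n : ℕ} (w : Equiv.Perm (Fin n))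
    (h : ∀ i : Fin (n-1), w (fLo i) < w (fHi i)) : w = 1 := by
  have key : ∀ m : ℕ, ∀ x : Fin n, x.val = m → m ≤ (w x).val := by
    intro m
    induction m with
    | zero => intro x _; exact Nat.zero_le _
    | succ p ih =>
      intro x hx
      have hxlt := x.isLt
      have hplt : p < n - 1 := by omega
      have h1 : w (fLo ⟨p, hplt⟩) < w x := by
        have hh := h ⟨p, hplt⟩
        rwa [show fHi (⟨p, hplt⟩ : Fin (n-1)) = x from
          Fin.val_injective (by rw [fHi_val]; show p + 1 = x.val; omega)] at hh
      have h2 : p ≤ (w (fLo ⟨p, hplt⟩)).val := ih (fLo ⟨p, hplt⟩) (by rw [fLo_val])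
      have h3 := Fin.lt_def.mp h1
      omega
  apply perm_eq_of_pointwise_le
  intro x
  simpa using key x.val x rfl

lemma eq_w0_of_descents {n : ℕ} (w : Equiv.Perm (Fin n))
    (h : ∀ i : Fin (n-1), w (fHi i) < w (fLo i)) : w = w0 n := by
  have h2 : ∀ i : Fin (n-1), ((Fin.revPerm : Equiv.Perm (Fin n)) * w) (fLo i)
      < ((Fin.revPerm : Equiv.Perm (Fin n)) * w) (fHi i) := by
    intro i
    simp only [Equiv.Perm.mul_apply, Fin.revPerm_apply]
    exact Fin.rev_lt_rev.mpr (h i)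
  have h3 := eq_one_of_ascents _ h2
  have h4 : w = (Fin.revPerm : Equiv.Perm (Fin n))⁻¹ := eq_inv_of_mul_eq_one_right h3
  exact h4.trans rfl

lemma exists_descent {n : ℕ} (w : Equiv.Perm (Fin n)) (hw : w ≠ 1) :
    ∃ i : Fin (n-1), w (fHi i) < w (fLo i) := by
  by_contra hc
  push_neg at hc
  apply hw
  apply eq_one_of_ascents
  intro i
  rcases lt_or_eq_of_le (hc i) with h | h
  · exact h
  · exact absurd (w.injective h) (fLo_ne_fHi i)

lemma exists_ascent {n : ℕ} (w : Equiv.Perm (Fin n)) (hw : w ≠ w0 n) :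
    ∃ i : Fin (n-1), w (fLo i) < w (fHi i) := by
  by_contra hc
  push_neg at hc
  apply hw
  apply eq_w0_of_descents
  intro i
  rcases lt_or_eq_of_le (hc i) with h | h
  · exact h
  · exact absurd (w.injective h) (Ne.symm (fLo_ne_fHi i))

/-! ### `len` equals the number of inversions -/

lemma wordProd_append {n : ℕ} (l1 l2 : List (Fin (n-1))) :
    wordProd (l1 ++ l2) = wordProd l1 * wordProd l2 := by
  simp [wordProd]

lemma wordProd_singleton {n : ℕ} (i : Fin (n-1)) : wordProd [i] = sPerm i := by
  simp [wordProd]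

lemma exists_word_aux {n : ℕ} :
    ∀ k (w : Equiv.Perm (Fin n)), invNum w ≤ k →
      ∃ l : List (Fin (n-1)), wordProd l = w ∧ l.length = invNum w := by
  intro k
  induction k with
  | zero =>
    intro w hw
    by_cases h1 : w = 1
    · subst h1
      exact ⟨[], rfl, by rw [invNum_one]; rfl⟩
    · obtain ⟨i, hi⟩ := exists_descent w h1
      exfalso
      have hin : (fHi i, fLo i) ∉ invSet w := fun hmem => by
        rw [mem_invSet] at hmem
        exact absurd hmem.1 (lt_asymm (fLo_lt_fHi i))
      have hin2 : (fLo i, fHi i) ∈ invSet w := by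
        rw [mem_invSet]; exact ⟨fLo_lt_fHi i, hi⟩
      have : 0 < invNum w := Finset.card_pos.mpr ⟨_, hin2⟩
      omega
  | succ k ih =>
    intro w hw
    by_cases h1 : w = 1
    · subst h1
      exact ⟨[], rfl, by rw [invNum_one]; rfl⟩
    · obtain ⟨i, hi⟩ := exists_descent w h1
      have hd := invNum_mul_sPerm_of_descent w i hi
      obtain ⟨l, hl, hlen⟩ := ih (w * sPerm i) (by omega)
      refine ⟨l ++ [i], ?_, ?_⟩
      · rw [wordProd_append, hl, wordProd_singleton, mul_sPerm_sPerm]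
      · rw [List.length_append, hlen]
        simp only [List.length_singleton]
        omega

lemma invNum_wordProd_le {n : ℕ} (l : List (Fin (n-1))) :
    invNum (wordProd l) ≤ l.length := by
  induction l using List.reverseRecOn with
  | nil =>
    have h0 : wordProd ([] : List (Fin (n-1))) = 1 := rfl
    rw [h0, invNum_one]
    exact Nat.zero_le _
  | append_singleton l i ih =>
    rw [wordProd_append, wordProd_singleton]
    have h1 := invNum_mul_sPerm_le (wordProd l) i
    rw [List.length_append, List.length_singleton]
    omega

lemma len_eq_invNum {n : ℕ} (w : Equiv.Perm (Fin n)) : len w = invNum w := by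
  obtain ⟨l0, hl0, hlen0⟩ := exists_word_aux (invNum w) w le_rfl
  apply le_antisymm
  · exact hlen0 ▸ Nat.sInf_le ⟨l0, hl0, rfl⟩
  · have hne : {k | ∃ l : List (Fin (n-1)), wordProd l = w ∧ l.length = k}.Nonempty :=
      ⟨invNum w, l0, hl0, hlen0⟩
    obtain ⟨l, hl, hlen⟩ := Nat.sInf_mem hne
    have h2 : invNum w ≤ l.length := hl ▸ invNum_wordProd_le l
    exact le_trans h2 (le_of_eq hlen)

lemma len_mul_of_ascent {n : ℕ} (w : Equiv.Perm (Fin n)) (i : Fin (n-1))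
    (h : w (fLo i) < w (fHi i)) : len (w * sPerm i) = len w + 1 := by
  rw [len_eq_invNum, len_eq_invNum, invNum_mul_sPerm_of_ascent w i h]

lemma len_mul_sPerm_le {n : ℕ} (w : Equiv.Perm (Fin n)) (i : Fin (n-1)) :
    len (w * sPerm i) ≤ len w + 1 := by
  rw [len_eq_invNum, len_eq_invNum]
  exact invNum_mul_sPerm_le w i

lemma invSet_w0 {n : ℕ} : invSet (w0 n) = Finset.univ.filter (fun p : Fin n × Fin n => p.1 < p.2) := by
  ext p
  rw [mem_invSet, Finset.mem_filter]
  simp only [Finset.mem_univ, true_and, w0, Fin.revPerm_apply]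
  constructor
  · exact fun h => h.1
  · exact fun h => ⟨h, Fin.rev_lt_rev.mpr h⟩

lemma len_lt_w0 {n : ℕ} (w : Equiv.Perm (Fin n)) (hw : w ≠ w0 n) : len w < len (w0 n) := by
  rw [len_eq_invNum, len_eq_invNum]
  have hsub : invSet w ⊆ Finset.univ.filter (fun p : Fin n × Fin n => p.1 < p.2) := by
    intro p hp
    rw [mem_invSet] at hp
    rw [Finset.mem_filter]
    exact ⟨Finset.mem_univ p, hp.1⟩
  obtain ⟨i, hi⟩ := exists_ascent w hw
  have hq : (fLo i, fHi i) ∈ Finset.univ.filter (fun p : Fin n × Fin n => p.1 < p.2) := by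
    rw [Finset.mem_filter]
    exact ⟨Finset.mem_univ _, fLo_lt_fHi i⟩
  have hqn : (fLo i, fHi i) ∉ invSet w := by
    rw [mem_invSet]; rintro ⟨-, h2⟩; exact (lt_asymm hi) h2
  calc invNum w < (Finset.univ.filter (fun p : Fin n × Fin n => p.1 < p.2)).card :=
        Finset.card_lt_card ⟨hsub, fun hs => hqn (hs hq)⟩
    _ = invNum (w0 n) := by rw [invNum, invSet_w0]

end GrothAux

namespace GrothAux

/-! ### Localization lemmas -/

lemma varMon_le (σ : Type) : varMon σ ≤ nonZeroDivisors (MvPolynomial σ ℤ) := by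
  rw [varMon, Submonoid.closure_le]
  rintro _ ⟨s, rfl⟩
  exact mem_nonZeroDivisors_of_ne_zero (MvPolynomial.X_ne_zero s)

noncomputable instance (σ : Type) : IsDomain (LaurentMv σ) :=
  IsLocalization.isDomain_localization (varMon_le σ)

lemma Xu_mul_XuInv {σ : Type} (s : σ) : Xu s * XuInv s = 1 := by
  rw [Xu, XuInv, ← Localization.mk_one_eq_algebraMap, Localization.mk_mul]
  simp only [mul_one, one_mul]
  exact Localization.mk_self (⟨MvPolynomial.X s, Submonoid.subset_closure ⟨s, rfl⟩⟩ : varMon σ)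

lemma Xu_injective {σ : Type} : Function.Injective (Xu (σ := σ)) := fun x y e =>
  MvPolynomial.X_injective
    (IsLocalization.injective (M := varMon σ) (LaurentMv σ) (varMon_le σ) e)

lemma Xu_sub_ne_zero {σ : Type} {x y : σ} (h : x ≠ y) : Xu x - Xu y ≠ 0 :=
  sub_ne_zero.mpr (fun e => h (Xu_injective e))

lemma laurent_hom_ext {σ : Type} {R : Type*} [CommRing R] {f g : LaurentMv σ →+* R}
    (h : ∀ s, f (Xu s) = g (Xu s)) : f = g := by
  apply IsLocalization.ringHom_ext (varMon σ)
  apply MvPolynomial.ringHom_ext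
  · intro r
    exact RingHom.congr_fun (RingHom.ext_int
      ((f.comp (algebraMap (MvPolynomial σ ℤ) (LaurentMv σ))).comp (MvPolynomial.C))
      ((g.comp (algebraMap (MvPolynomial σ ℤ) (LaurentMv σ))).comp (MvPolynomial.C))) r
  · intro s
    exact h s

lemma substLaurent_Xu {σ τ : Type} (f : σ → LaurentMv τ) (hf : ∀ s, IsUnit (f s)) (s : σ) :
    substLaurent f hf (Xu s) = f s := by
  rw [substLaurent, Xu, IsLocalization.lift_eq]
  simp

lemma specG_Xu_inl {n : ℕ} (v : Equiv.Perm (Fin n)) (j : Fin n) :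
    specG v (Xu (Sum.inl j)) = Xu (v j) := by
  rw [specG, substLaurent_Xu]
  rfl

lemma specG_Xu_inr {n : ℕ} (v : Equiv.Perm (Fin n)) (j : Fin n) :
    specG v (Xu (Sum.inr j)) = Xu j := by
  rw [specG, substLaurent_Xu]
  rfl

lemma inv_eq_of_mul {M : Type*} [CommMonoid M] {a b c : M} (h1 : a * b = 1)
    (h2 : a * c = 1) : b = c := by
  calc b = b * (a * c) := by rw [h2, mul_one]
    _ = (a * b) * c := by rw [← mul_assoc, mul_comm b a]
    _ = c := by rw [h1, one_mul]

lemma specG_XuInv_inl {n : ℕ} (v : Equiv.Perm (Fin n)) (j : Fin n) :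
    specG v (XuInv (Sum.inl j)) = XuInv (v j) := by
  have h1 : specG v (Xu (Sum.inl j)) * specG v (XuInv (Sum.inl j)) = 1 := by
    rw [← map_mul, Xu_mul_XuInv, map_one]
  rw [specG_Xu_inl] at h1
  exact inv_eq_of_mul h1 (Xu_mul_XuInv (v j))

lemma spec_factor {n : ℕ} (v : Equiv.Perm (Fin n)) (p : Fin n × Fin n) :
    specG v (1 - Xu (Sum.inr p.2) * XuInv (Sum.inl p.1)) = 1 - Xu p.2 * XuInv (v p.1) := by
  rw [map_sub, map_one, map_mul, specG_Xu_inr, specG_XuInv_inl]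

lemma specG_sActL {n : ℕ} (v : Equiv.Perm (Fin n)) (i : Fin (n-1))
    (x : LaurentMv (Fin n ⊕ Fin n)) :
    specG v (sActL i x) = specG (v * sPerm i) x := by
  have key : (specG v).comp (sActL i) = specG (v * sPerm i) := by
    apply laurent_hom_ext
    intro s
    cases s with
    | inl j =>
      show specG v (sActL i (Xu (Sum.inl j))) = specG (v * sPerm i) (Xu (Sum.inl j))
      rw [sActL, substLaurent_Xu]
      rw [show (Equiv.sumCongr (sPerm i) (Equiv.refl (Fin n))) (Sum.inl j)
        = Sum.inl (sPerm i j) from rfl]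
      rw [specG_Xu_inl, specG_Xu_inl]
      rfl
    | inr j =>
      show specG v (sActL i (Xu (Sum.inr j))) = specG (v * sPerm i) (Xu (Sum.inr j))
      rw [sActL, substLaurent_Xu]
      rw [show (Equiv.sumCongr (sPerm i) (Equiv.refl (Fin n))) (Sum.inr j)
        = Sum.inr j from rfl]
      rw [specG_Xu_inr, specG_Xu_inr]
  exact RingHom.congr_fun key x

/-! ### The product over the crossing set -/

noncomputable def Pfun {n : ℕ} (v : Equiv.Perm (Fin n)) : LaurentMv (Fin n) :=
  ∏ p ∈ CD v, (1 - Xu p.1 * XuInv (v p.2))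

lemma CD_w0 {n : ℕ} : CD (w0 n)
    = Finset.univ.filter (fun p : Fin n × Fin n => p.1.val + p.2.val + 2 ≤ n) := by
  ext p
  simp only [CD, Finset.mem_filter, Finset.mem_univ, true_and]; simp only [w0]
  rw [show (Fin.revPerm : Equiv.Perm (Fin n))⁻¹ = Fin.revPerm from rfl]
  simp only [Fin.revPerm_apply]
  rw [Fin.lt_def, Fin.lt_def, Fin.val_rev, Fin.val_rev]
  have h1 := p.1.isLt
  have h2 := p.2.isLt
  omega

lemma spec_diag_w0 {n : ℕ} (G : Equiv.Perm (Fin n) → LaurentMv (Fin n ⊕ Fin n))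
    (hG : GrothFamily n G) : specG (w0 n) (G (w0 n)) = Pfun (w0 n) := by
  rw [hG.1, map_prod, Pfun, CD_w0]
  apply Finset.prod_nbij' (i := Prod.swap) (j := Prod.swap)
  · intro p hp
    rw [Finset.mem_filter] at hp ⊢
    exact ⟨Finset.mem_univ _, by have := hp.2; simp only [Prod.fst_swap, Prod.snd_swap]; omega⟩
  · intro p hp
    rw [Finset.mem_filter] at hp ⊢
    exact ⟨Finset.mem_univ _, by have := hp.2; simp only [Prod.fst_swap, Prod.snd_swap]; omega⟩
  · intro p _; simp
  · intro p _; simp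
  · intro p _
    rw [spec_factor]
    rfl

lemma spec_w0_zero {n : ℕ} (G : Equiv.Perm (Fin n) → LaurentMv (Fin n ⊕ Fin n))
    (hG : GrothFamily n G) (v : Equiv.Perm (Fin n)) (hv : v ≠ w0 n) :
    specG v (G (w0 n)) = 0 := by
  have hex : ∃ i : Fin n, i.val + (v i).val + 2 ≤ n := by
    by_contra hc
    push_neg at hc
    apply hv
    apply perm_eq_of_pointwise_le v (w0 n)
    intro x
    have h1 := hc x
    have h2 : ((w0 n) x).val = n - (x.val + 1) := rfl
    have h3 := x.isLt
    have h4 := (v x).isLt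
    omega
  obtain ⟨i, hi⟩ := hex
  rw [hG.1, map_prod]
  apply Finset.prod_eq_zero (i := (i, v i))
  · rw [Finset.mem_filter]
    exact ⟨Finset.mem_univ _, hi⟩
  · rw [spec_factor]
    show 1 - Xu (v i) * XuInv (v i) = 0
    rw [Xu_mul_XuInv, sub_self]

end GrothAux

namespace GrothAux

/-! ### The key combinatorial identity on crossing sets -/

lemma CD_mul_sPerm {n : ℕ} (v : Equiv.Perm (Fin n)) (i : Fin (n-1))
    (h : v (fLo i) < v (fHi i)) :
    CD (v * sPerm i)
      = insert (v (fLo i), fLo i) ((CD v).image fun p => (p.1, sPerm i p.2)) := by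
  ext x
  obtain ⟨r, c⟩ := x
  rw [Finset.mem_insert, Finset.mem_image]
  have himg : (∃ p ∈ CD v, (fun p : Fin n × Fin n => (p.1, sPerm i p.2)) p = (r, c))
      ↔ (r, sPerm i c) ∈ CD v := by
    constructor
    · rintro ⟨p, hp, he⟩
      simp only [Prod.mk.injEq] at he
      obtain ⟨he1, he2⟩ := he
      have hpe : p = (r, sPerm i c) := by
        refine Prod.ext he1 ?_
        rw [← he2, sPerm_sPerm]
      rwa [hpe] at hp
    · intro hm
      exact ⟨(r, sPerm i c), hm, by simp [sPerm_sPerm]⟩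
  rw [himg]
  simp only [CD, Finset.mem_filter, Finset.mem_univ, true_and, Prod.mk.injEq]
  rw [show (v * sPerm i)⁻¹ = sPerm i * v⁻¹ from by rw [mul_inv_rev, sPerm_inv]]
  simp only [Equiv.Perm.mul_apply]
  have hrm : v (v⁻¹ r) = r := v.apply_symm_apply r
  set m := v⁻¹ r with hmdef
  rw [← hrm]
  have hvi : Function.Injective v := v.injective
  have hLH : (fLo i : Fin n) < fHi i := fLo_lt_fHi i
  have hne_lohi : (fLo i : Fin n) ≠ fHi i := fLo_ne_fHi i
  rcases eq_or_ne c (fLo i) with rfl | hc1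
  · rw [sPerm_fLo]
    rcases eq_or_ne m (fLo i) with hm1 | hm1
    · rw [hm1, sPerm_fLo]
      exact iff_of_true ⟨h, hLH⟩ (Or.inl ⟨rfl, rfl⟩)
    rcases eq_or_ne m (fHi i) with hm2 | hm2
    · rw [hm2, sPerm_fHi]
      apply iff_of_false
      · rintro ⟨h1, -⟩; exact lt_irrefl _ h1
      · rintro (⟨h1, -⟩ | ⟨h1, -⟩)
        · exact hne_lohi (hvi h1).symm
        · exact lt_irrefl _ h1
    · rw [sPerm_fix i m hm1 hm2]
      have e1 : m.val ≠ i.val := fun e => hm1 (Fin.val_injective (by rw [e, fLo_val]))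
      have e2 : m.val ≠ i.val + 1 := fun e => hm2 (Fin.val_injective (by rw [e, fHi_val]))
      constructor
      · rintro ⟨h1, h2⟩
        refine Or.inr ⟨h1, ?_⟩
        rw [Fin.lt_def, fLo_val] at h2
        rw [Fin.lt_def, fHi_val]
        omega
      · rintro (⟨h1, -⟩ | ⟨h1, h2⟩)
        · exact absurd (hvi h1) hm1
        · refine ⟨h1, ?_⟩
          rw [Fin.lt_def, fHi_val] at h2
          rw [Fin.lt_def, fLo_val]
          omega
  rcases eq_or_ne c (fHi i) with rfl | hc2
  · rw [sPerm_fHi]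
    rcases eq_or_ne m (fLo i) with hm1 | hm1
    · rw [hm1, sPerm_fLo]
      apply iff_of_false
      · rintro ⟨h1, -⟩; exact lt_irrefl _ h1
      · rintro (⟨-, h2⟩ | ⟨-, h2⟩)
        · exact hne_lohi h2.symm
        · exact lt_irrefl _ h2
    rcases eq_or_ne m (fHi i) with hm2 | hm2
    · rw [hm2, sPerm_fHi]
      apply iff_of_false
      · rintro ⟨h1, -⟩; exact (lt_asymm h) h1
      · rintro (⟨h1, -⟩ | ⟨h1, -⟩)
        · exact hne_lohi (hvi h1).symm
        · exact (lt_asymm h) h1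
    · rw [sPerm_fix i m hm1 hm2]
      have e1 : m.val ≠ i.val := fun e => hm1 (Fin.val_injective (by rw [e, fLo_val]))
      have e2 : m.val ≠ i.val + 1 := fun e => hm2 (Fin.val_injective (by rw [e, fHi_val]))
      constructor
      · rintro ⟨h1, h2⟩
        refine Or.inr ⟨h1, ?_⟩
        rw [Fin.lt_def, fHi_val] at h2
        rw [Fin.lt_def, fLo_val]
        omega
      · rintro (⟨-, h2⟩ | ⟨h1, h2⟩)
        · exact absurd h2.symm hne_lohi
        · refine ⟨h1, ?_⟩
          rw [Fin.lt_def, fLo_val] at h2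
          rw [Fin.lt_def, fHi_val]
          omega
  · rw [sPerm_fix i c hc1 hc2]
    have ec1 : c.val ≠ i.val := fun e => hc1 (Fin.val_injective (by rw [e, fLo_val]))
    have ec2 : c.val ≠ i.val + 1 := fun e => hc2 (Fin.val_injective (by rw [e, fHi_val]))
    rcases eq_or_ne m (fLo i) with hm1 | hm1
    · rw [hm1, sPerm_fLo]
      constructor
      · rintro ⟨h1, h2⟩
        refine Or.inr ⟨h1, ?_⟩
        rw [Fin.lt_def, fHi_val] at h2
        rw [Fin.lt_def, fLo_val]
        omega
      · rintro (⟨-, h2⟩ | ⟨h1, h2⟩)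
        · exact absurd h2 hc1
        · refine ⟨h1, ?_⟩
          rw [Fin.lt_def, fLo_val] at h2
          rw [Fin.lt_def, fHi_val]
          omega
    rcases eq_or_ne m (fHi i) with hm2 | hm2
    · rw [hm2, sPerm_fHi]
      constructor
      · rintro ⟨h1, h2⟩
        refine Or.inr ⟨h1, ?_⟩
        rw [Fin.lt_def, fLo_val] at h2
        rw [Fin.lt_def, fHi_val]
        omega
      · rintro (⟨-, h2⟩ | ⟨h1, h2⟩)
        · exact absurd h2 hc1
        · refine ⟨h1, ?_⟩
          rw [Fin.lt_def, fHi_val] at h2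
          rw [Fin.lt_def, fLo_val]
          omega
    · rw [sPerm_fix i m hm1 hm2]
      constructor
      · rintro ⟨h1, h2⟩
        exact Or.inr ⟨h1, h2⟩
      · rintro (⟨-, h2⟩ | hh)
        · exact absurd h2 hc1
        · exact hh

lemma Pfun_step {n : ℕ} (v : Equiv.Perm (Fin n)) (i : Fin (n-1))
    (h : v (fLo i) < v (fHi i)) :
    Pfun (v * sPerm i) = (1 - Xu (v (fLo i)) * XuInv (v (fHi i))) * Pfun v := by
  have hnotmem : (v (fLo i), fLo i) ∉ (CD v).image (fun p => (p.1, sPerm i p.2)) := by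
    rw [Finset.mem_image]
    rintro ⟨p, hp, he⟩
    simp only [Prod.mk.injEq] at he
    obtain ⟨he1, he2⟩ := he
    have hp2 : p.2 = fHi i := by
      have := congrArg (sPerm i) he2
      rwa [sPerm_sPerm, sPerm_fLo] at this
    simp only [CD, Finset.mem_filter, Finset.mem_univ, true_and] at hp
    rw [he1, hp2, show v⁻¹ (v (fLo i)) = fLo i from v.symm_apply_apply _] at hp
    exact absurd hp.2 (lt_asymm (fLo_lt_fHi i))
  have hinj : ∀ x ∈ CD v, ∀ y ∈ CD v,
      (fun p : Fin n × Fin n => (p.1, sPerm i p.2)) x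
        = (fun p : Fin n × Fin n => (p.1, sPerm i p.2)) y → x = y := by
    intro x _ y _ he
    simp only [Prod.mk.injEq] at he
    exact Prod.ext he.1 ((sPerm i).injective he.2)
  rw [Pfun, CD_mul_sPerm v i h, Finset.prod_insert hnotmem, Finset.prod_image hinj]
  have hfac : (v * sPerm i) (fLo i) = v (fHi i) := by
    rw [Equiv.Perm.mul_apply, sPerm_fLo]
  rw [hfac]
  congr 1
  rw [Pfun]
  apply Finset.prod_congr rfl
  intro p _
  rw [show (v * sPerm i) (sPerm i p.2) = v p.2 from by rw [Equiv.Perm.mul_apply, sPerm_sPerm]]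

lemma Xu_mul_Pfun_step {n : ℕ} (v : Equiv.Perm (Fin n)) (i : Fin (n-1))
    (h : v (fLo i) < v (fHi i)) :
    Xu (v (fHi i)) * Pfun (v * sPerm i)
      = (Xu (v (fHi i)) - Xu (v (fLo i))) * Pfun v := by
  rw [Pfun_step v i h]
  have hb := Xu_mul_XuInv (v (fHi i))
  calc Xu (v (fHi i)) * ((1 - Xu (v (fLo i)) * XuInv (v (fHi i))) * Pfun v)
      = (Xu (v (fHi i)) - (Xu (v (fHi i)) * XuInv (v (fHi i))) * Xu (v (fLo i))) * Pfun v := by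
        ring
    _ = (Xu (v (fHi i)) - Xu (v (fLo i))) * Pfun v := by rw [hb, one_mul]

/-! ### The main induction -/

lemma main_induction {n : ℕ} (G : Equiv.Perm (Fin n) → LaurentMv (Fin n ⊕ Fin n))
    (hG : GrothFamily n G) :
    ∀ k (w : Equiv.Perm (Fin n)), len (w0 n) - len w ≤ k →
      ((∀ v, len v < len w → specG v (G w) = 0) ∧ specG w (G w) = Pfun w) := by
  have base : (∀ v : Equiv.Perm (Fin n), len v < len (w0 n) → specG v (G (w0 n)) = 0)
      ∧ specG (w0 n) (G (w0 n)) = Pfun (w0 n) := by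
    refine ⟨fun v hv => spec_w0_zero G hG v ?_, spec_diag_w0 G hG⟩
    intro e
    rw [e] at hv
    exact lt_irrefl _ hv
  intro k
  induction k with
  | zero =>
    intro w hw
    have hww : w = w0 n := by
      by_contra hne
      have := len_lt_w0 w hne
      omega
    rw [hww]
    exact base
  | succ k ih =>
    intro w hw
    by_cases hne : w = w0 n
    · rw [hne]; exact base
    · obtain ⟨i, hi⟩ := exists_ascent w hne
      have hlen' : len (w * sPerm i) = len w + 1 := len_mul_of_ascent w i hi
      have hlt0 : len w < len (w0 n) := len_lt_w0 w hne
      have hcond : len ((w * sPerm i) * sPerm i) < len (w * sPerm i) := by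
        rw [mul_sPerm_sPerm]
        omega
      have heq := hG.2 (w * sPerm i) i hcond
      rw [mul_sPerm_sPerm] at heq
      obtain ⟨V', T'⟩ := ih (w * sPerm i) (by omega)
      constructor
      · intro v hv
        have h2 := congrArg (specG v) heq
        simp only [map_mul, map_sub, specG_Xu_inl, specG_sActL] at h2
        rw [V' v (by omega), V' (v * sPerm i)
          (by have := len_mul_sPerm_le v i; omega), mul_zero, mul_zero, sub_zero] at h2
        have hne2 : Xu (v (fLo i)) - Xu (v (fHi i)) ≠ 0 :=
          Xu_sub_ne_zero (fun e => fLo_ne_fHi i (v.injective e))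
        exact (mul_eq_zero.mp h2).resolve_left hne2
      · have h2 := congrArg (specG w) heq
        simp only [map_mul, map_sub, specG_Xu_inl, specG_sActL] at h2
        rw [V' w (by omega), mul_zero, T', zero_sub, Xu_mul_Pfun_step w i hi] at h2
        have h3 : (Xu (w (fLo i)) - Xu (w (fHi i))) * specG w (G w)
            = (Xu (w (fLo i)) - Xu (w (fHi i))) * Pfun w := by
          rw [h2]; ring
        exact mul_left_cancel₀
          (Xu_sub_ne_zero (fun e => fLo_ne_fHi i (w.injective e))) h3

end GrothAux


/-- **Factorization of the diagonal specialization** (Buch-Rimányi, Cor. 5):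
`𝔊_v(b_v; b) = ∏_{(i,j) ∈ C(D_v)} (1 - b_i/b_{v(j)})`. -/
theorem grothendieck_diagonal_specialization (n : ℕ) (hn : 1 ≤ n) (v : Equiv.Perm (Fin n))
    (G : Equiv.Perm (Fin n) → LaurentMv (Fin n ⊕ Fin n)) (hG : GrothFamily n G) :
    specG v (G v) = ∏ p ∈ CD v, (1 - Xu p.1 * XuInv (v p.2)) := by
  exact (GrothAux.main_induction G hG (len (w0 n) - len v) v le_rfl).2
end

section
/- Let n ≥ 1 and v ∈ S_n. Then 𝔖_v(y_v; y) = ∏_{(i,j) ∈ C(D_v)} (y_{v(j)} − y_i); i.e. the specialization of the double Schubert polynomial of v at x = y_v is a product of linear factors indexed by the crossing positions of the diagram D_v. -/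
set_option maxHeartbeats 1000000
set_option synthInstance.maxHeartbeats 400000

open MvPolynomial

namespace SchbAux

variable {n : ℕ}

lemma sPerm_def (i : Fin (n-1)) : sPerm i = Equiv.swap (fLo i) (fHi i) := rfl

lemma fLo_lt_fHi (i : Fin (n-1)) : fLo i < fHi i := by
  simp [fLo, fHi, Fin.lt_def]

lemma sPerm_mul_self (i : Fin (n-1)) : sPerm i * sPerm i = 1 := Equiv.swap_mul_self _ _

lemma sPerm_sPerm (i : Fin (n-1)) (x : Fin n) : sPerm i (sPerm i x) = x := by
  rw [sPerm_def, Equiv.swap_apply_self]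

lemma sPerm_fLo (i : Fin (n-1)) : sPerm i (fLo i) = fHi i := by
  rw [sPerm_def, Equiv.swap_apply_left]

lemma sPerm_fHi (i : Fin (n-1)) : sPerm i (fHi i) = fLo i := by
  rw [sPerm_def, Equiv.swap_apply_right]

lemma sPerm_inv (i : Fin (n-1)) : (sPerm i)⁻¹ = sPerm i := by
  rw [sPerm_def, Equiv.swap_inv]

lemma sPerm_val (i : Fin (n-1)) (x : Fin n) :
    (sPerm i x).val =
      if x.val = i.val then i.val + 1 else if x.val = i.val + 1 then i.val else x.val := by
  rw [sPerm_def, Equiv.swap_apply_def]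
  have h1 : (x = fLo i) = (x.val = i.val) := by rw [Fin.ext_iff]; rfl
  have h2 : (x = fHi i) = (x.val = i.val + 1) := by rw [Fin.ext_iff]; rfl
  simp only [h1, h2]
  split_ifs <;> rfl

lemma sPerm_lt_sPerm (i : Fin (n-1)) {j k : Fin n} (h : j < k)
    (hne : ¬(j = fLo i ∧ k = fHi i)) : sPerm i j < sPerm i k := by
  have hi := i.isLt
  have hkl := k.isLt
  have hne' : ¬(j.val = i.val ∧ k.val = i.val + 1) := by
    rintro ⟨a, b⟩; exact hne ⟨Fin.ext a, Fin.ext b⟩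
  have hjk : j.val < k.val := h
  rw [Fin.lt_def, sPerm_val, sPerm_val]
  split_ifs <;> omega

lemma mem_CD {v : Equiv.Perm (Fin n)} {p : Fin n × Fin n} :
    p ∈ CD v ↔ p.1 < v p.2 ∧ p.2 < v⁻¹ p.1 := by
  simp [CD]

lemma CD_mul_eq (v : Equiv.Perm (Fin n)) (i : Fin (n-1)) (h : v (fLo i) < v (fHi i)) :
    CD (v * sPerm i) =
      insert (v (fLo i), fLo i) ((CD v).image fun p => (p.1, sPerm i p.2)) := by
  have hinv : ∀ a, (v * sPerm i)⁻¹ a = sPerm i (v⁻¹ a) := by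
    intro a; rw [mul_inv_rev, sPerm_inv, Equiv.Perm.mul_apply]
  ext ⟨a, c⟩
  simp only [mem_CD, Finset.mem_insert, Finset.mem_image, Prod.mk.injEq, Prod.ext_iff]
  constructor
  · rintro ⟨h1, h2⟩
    rw [hinv] at h2
    by_cases hq : a = v (fLo i) ∧ c = fLo i
    · exact Or.inl ⟨hq.1.symm ▸ rfl, hq.2⟩
    · right
      refine ⟨(a, sPerm i c), ⟨h1, ?_⟩, rfl, sPerm_sPerm i c⟩
      · have : sPerm i c < sPerm i (sPerm i (v⁻¹ a)) := by
          apply sPerm_lt_sPerm i h2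
          rintro ⟨hc, hk⟩
          apply hq
          have : v⁻¹ a = fLo i := by
            have := congrArg (sPerm i) hk
            rwa [sPerm_sPerm, sPerm_fHi] at this
          exact ⟨by rw [← this, Equiv.Perm.inv_def, Equiv.apply_symm_apply], hc⟩
        rwa [sPerm_sPerm] at this
  · rintro (⟨ha, hc⟩ | ⟨p, hp, ha, hc⟩)
    · subst ha; subst hc
      constructor
      · rw [Equiv.Perm.mul_apply, sPerm_fLo]; exact h
      · rw [hinv, Equiv.Perm.inv_def, Equiv.symm_apply_apply, sPerm_fLo]; exact fLo_lt_fHi i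
    · subst ha; subst hc
      constructor
      · rw [Equiv.Perm.mul_apply, sPerm_sPerm]; exact hp.1
      · rw [hinv]
        apply sPerm_lt_sPerm i hp.2
        rintro ⟨hj, hk⟩
        have hb : p.1 = v (fHi i) := by rw [← hk, Equiv.Perm.inv_def, Equiv.apply_symm_apply]
        have := hp.1
        rw [hb, hj] at this
        exact absurd h (asymm this)

lemma p0_not_mem (v : Equiv.Perm (Fin n)) (i : Fin (n-1)) :
    (v (fLo i), fLo i) ∉ (CD v).image fun p => (p.1, sPerm i p.2) := by
  rintro hmem
  rw [Finset.mem_image] at hmem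
  obtain ⟨p, hp, hq⟩ := hmem
  rw [Prod.ext_iff] at hq
  obtain ⟨h1, h2⟩ := hq
  have hp2 : p.2 = fHi i := by
    have := congrArg (sPerm i) h2
    rwa [sPerm_sPerm, sPerm_fLo] at this
  rw [mem_CD] at hp
  have := hp.2
  rw [h1, Equiv.Perm.inv_def, Equiv.symm_apply_apply, hp2] at this
  exact absurd this (asymm (fLo_lt_fHi i))

lemma card_CD_mul (v : Equiv.Perm (Fin n)) (i : Fin (n-1)) (h : v (fLo i) < v (fHi i)) :
    (CD (v * sPerm i)).card = (CD v).card + 1 := by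
  rw [CD_mul_eq v i h, Finset.card_insert_of_notMem (p0_not_mem v i),
    Finset.card_image_of_injective]
  intro p q hpq
  rw [Prod.ext_iff] at hpq
  obtain ⟨h1, h2⟩ := hpq
  have := congrArg (sPerm i) h2
  rw [sPerm_sPerm, sPerm_sPerm] at this
  exact Prod.ext h1 this

lemma prod_CD_mul (v : Equiv.Perm (Fin n)) (i : Fin (n-1)) (h : v (fLo i) < v (fHi i)) :
    ∏ p ∈ CD (v * sPerm i), (X ((v * sPerm i) p.2) - X p.1 : MvPolynomial (Fin n) ℤ) =
      (X (v (fHi i)) - X (v (fLo i))) *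
        ∏ p ∈ CD v, (X (v p.2) - X p.1 : MvPolynomial (Fin n) ℤ) := by
  rw [CD_mul_eq v i h, Finset.prod_insert (p0_not_mem v i)]
  congr 1
  · rw [Equiv.Perm.mul_apply, sPerm_fLo]
  · rw [Finset.prod_image]
    · apply Finset.prod_congr rfl
      intro p _
      rw [Equiv.Perm.mul_apply, sPerm_sPerm]
    · intro p _ q _ hpq
      rw [Prod.ext_iff] at hpq
      obtain ⟨h1, h2⟩ := hpq
      have := congrArg (sPerm i) h2
      rw [sPerm_sPerm, sPerm_sPerm] at this
      exact Prod.ext h1 this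



lemma strictMono_perm_eq_one (u : Equiv.Perm (Fin n)) (hu : StrictMono ⇑u) : u = 1 := by
  have : ⇑u = id := by
    apply (StrictMono.range_inj hu strictMono_id).mp
    rw [Set.range_id]
    exact u.surjective.range_eq
  exact Equiv.ext fun x => congrFun this x

lemma eq_one_of_no_descent (v : Equiv.Perm (Fin n))
    (h : ∀ i : Fin (n-1), ¬ v (fHi i) < v (fLo i)) : v = 1 := by
  match n, v, h with
  | 0, v, h => exact Subsingleton.elim v 1
  | (m+1), v, h =>
    apply strictMono_perm_eq_one
    rw [Fin.strictMono_iff_lt_succ]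
    intro i
    have hne : v (i.castSucc) ≠ v (i.succ) := by
      intro hh
      have := v.injective hh
      simp [Fin.ext_iff] at this
    have h2 := h i
    have e1 : fLo (n := m+1) i = i.castSucc := rfl
    have e2 : fHi (n := m+1) i = i.succ := rfl
    rw [e1, e2] at h2
    exact lt_of_le_of_ne (le_of_not_gt h2) hne

lemma w0_apply (j : Fin n) : w0 n j = j.rev := rfl

lemma w0_inv : (w0 n)⁻¹ = w0 n := by
  ext x
  simp only [w0]
  rw [← Fin.revPerm_symm]
  rfl

lemma eq_w0_of_no_ascent (v : Equiv.Perm (Fin n))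
    (h : ∀ i : Fin (n-1), ¬ v (fLo i) < v (fHi i)) : v = w0 n := by
  have key : v * w0 n = 1 := by
    apply eq_one_of_no_descent
    intro i
    set j : Fin (n-1) := ⟨(n - 1) - 1 - i.val, by have := i.isLt; omega⟩ with hj
    have h2 := h j
    intro hlt
    apply h2
    have e1 : (v * w0 n) (fHi i) = v (fLo j) := by
      have := i.isLt
      simp only [Equiv.Perm.mul_apply, w0_apply, fLo, fHi, Fin.rev, hj]
      congr 1
      simp only [Fin.ext_iff]
      omega
    have e2 : (v * w0 n) (fLo i) = v (fHi j) := by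
      have := i.isLt
      simp only [Equiv.Perm.mul_apply, w0_apply, fLo, fHi, Fin.rev, hj]
      congr 1
      simp only [Fin.ext_iff]
      omega
    rw [e1, e2] at hlt
    exact hlt
  rw [eq_inv_of_mul_eq_one_left key, w0_inv]

lemma descent_mem_CD (v : Equiv.Perm (Fin n)) (i : Fin (n-1)) (h : v (fHi i) < v (fLo i)) :
    (v (fHi i), fLo i) ∈ CD v := by
  rw [mem_CD]
  exact ⟨h, by rw [Equiv.Perm.inv_def, Equiv.symm_apply_apply]; exact fLo_lt_fHi i⟩

lemma ascent_of_mul_descent (v : Equiv.Perm (Fin n)) (i : Fin (n-1))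
    (h : v (fHi i) < v (fLo i)) :
    (v * sPerm i) (fLo i) < (v * sPerm i) (fHi i) := by
  rw [Equiv.Perm.mul_apply, Equiv.Perm.mul_apply, sPerm_fLo, sPerm_fHi]
  exact h

lemma mul_sPerm_sPerm (v : Equiv.Perm (Fin n)) (i : Fin (n-1)) :
    v * sPerm i * sPerm i = v := by
  rw [mul_assoc, sPerm_mul_self, mul_one]

lemma card_CD_of_descent (v : Equiv.Perm (Fin n)) (i : Fin (n-1))
    (h : v (fHi i) < v (fLo i)) :
    (CD (v * sPerm i)).card + 1 = (CD v).card := by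
  have := card_CD_mul (v * sPerm i) i (ascent_of_mul_descent v i h)
  rw [mul_sPerm_sPerm] at this
  omega

lemma wordProd_nil : wordProd ([] : List (Fin (n-1))) = 1 := rfl

lemma wordProd_snoc (l : List (Fin (n-1))) (i : Fin (n-1)) :
    wordProd (l ++ [i]) = wordProd l * sPerm i := by
  simp [wordProd]

lemma exists_word (v : Equiv.Perm (Fin n)) :
    ∃ l : List (Fin (n-1)), wordProd l = v ∧ l.length = (CD v).card := by
  generalize hc : (CD v).card = c
  induction c generalizing v with
  | zero =>
    refine ⟨[], ?_, rfl⟩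
    rw [wordProd_nil]
    symm
    apply eq_one_of_no_descent
    intro i hd
    have := descent_mem_CD v i hd
    rw [Finset.card_eq_zero] at hc
    rw [hc] at this
    exact absurd this (Finset.notMem_empty _)
  | succ c ih =>
    have hv : v ≠ 1 := by
      intro h1
      rw [h1] at hc
      have : CD (1 : Equiv.Perm (Fin n)) = ∅ := by
        ext p
        rw [mem_CD]
        simp only [Equiv.Perm.one_apply, inv_one, Finset.notMem_empty, iff_false]
        rintro ⟨a, b⟩
        exact absurd (a.trans b) (lt_irrefl _)
      rw [this] at hc
      simp at hc
    have hd : ∃ i : Fin (n-1), v (fHi i) < v (fLo i) := by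
      by_contra hno
      push_neg at hno
      exact hv (eq_one_of_no_descent v fun i hh => absurd hh (not_lt_of_ge (hno i)))
    obtain ⟨i, hi⟩ := hd
    have hcard := card_CD_of_descent v i hi
    rw [hc] at hcard
    obtain ⟨l, hl, hlen⟩ := ih (v * sPerm i) (by omega)
    refine ⟨l ++ [i], ?_, by simp [hlen]⟩
    rw [wordProd_snoc, hl, mul_sPerm_sPerm]

lemma card_CD_mul_le (v : Equiv.Perm (Fin n)) (i : Fin (n-1)) :
    (CD (v * sPerm i)).card ≤ (CD v).card + 1 := by
  rcases lt_trichotomy (v (fLo i)) (v (fHi i)) with h | h | h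
  · rw [card_CD_mul v i h]
  · exact absurd (v.injective h) (by simp [fLo, fHi, Fin.ext_iff])
  · have := card_CD_of_descent v i h
    omega

lemma card_le_of_word (l : List (Fin (n-1))) : (CD (wordProd l)).card ≤ l.length := by
  induction l using List.reverseRecOn with
  | nil =>
    have : CD (wordProd ([] : List (Fin (n-1)))) = ∅ := by
      ext p
      rw [wordProd_nil, mem_CD]
      simp only [Equiv.Perm.one_apply, inv_one, Finset.notMem_empty, iff_false]
      rintro ⟨a, b⟩
      exact absurd (a.trans b) (lt_irrefl _)
    simp [this]
  | append_singleton l i ih =>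
    rw [wordProd_snoc]
    calc (CD (wordProd l * sPerm i)).card ≤ (CD (wordProd l)).card + 1 :=
          card_CD_mul_le _ i
      _ ≤ l.length + 1 := by omega
      _ = (l ++ [i]).length := by simp

lemma len_eq (v : Equiv.Perm (Fin n)) : len v = (CD v).card := by
  apply le_antisymm
  · obtain ⟨l, hl, hlen⟩ := exists_word v
    exact Nat.sInf_le ⟨l, hl, hlen⟩
  · have hne : {k | ∃ l : List (Fin (n-1)), wordProd l = v ∧ l.length = k}.Nonempty := by
      obtain ⟨l, hl, hlen⟩ := exists_word v
      exact ⟨_, l, hl, hlen⟩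
    obtain ⟨l, hl, hlen⟩ := Nat.sInf_mem hne
    rw [len, ← hlen, ← hl]
    exact card_le_of_word l

lemma specS_X_inl (v : Equiv.Perm (Fin n)) (a : Fin n) :
    specS v (X (Sum.inl a)) = X (v a) := by simp [specS]

lemma specS_factor (v : Equiv.Perm (Fin n)) (a b : Fin n) :
    specS v (X (Sum.inl a) - X (Sum.inr b)) = X (v a) - X b := by simp [specS]

lemma specS_rename (v : Equiv.Perm (Fin n)) (i : Fin (n-1))
    (f : MvPolynomial (Fin n ⊕ Fin n) ℤ) :
    specS v (rename (Equiv.sumCongr (sPerm i) (Equiv.refl (Fin n))) f) =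
      specS (v * sPerm i) f := by
  simp only [specS]
  rw [show (aeval (Sum.elim (fun j => (X (v j) : MvPolynomial (Fin n) ℤ)) X))
      ((rename ⇑(Equiv.sumCongr (sPerm i) (Equiv.refl (Fin n)))) f)
      = aeval ((Sum.elim (fun j => (X (v j) : MvPolynomial (Fin n) ℤ)) X) ∘
        ⇑(Equiv.sumCongr (sPerm i) (Equiv.refl (Fin n)))) f from aeval_rename _ _ _]
  have hfun : (Sum.elim (fun j => (X (v j) : MvPolynomial (Fin n) ℤ)) X) ∘
      ⇑(Equiv.sumCongr (sPerm i) (Equiv.refl (Fin n))) =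
      Sum.elim (fun j => X ((v * sPerm i) j)) X := by
    funext x
    cases x with
    | inl a => simp [Equiv.Perm.mul_apply]
    | inr b => simp
  rw [hfun]

lemma X_sub_X_ne {a b : Fin n} (h : a ≠ b) :
    (X a - X b : MvPolynomial (Fin n) ℤ) ≠ 0 :=
  sub_ne_zero_of_ne (fun hh => h (MvPolynomial.X_injective hh))

lemma fLo_ne_fHi (i : Fin (n-1)) : fLo i ≠ fHi i := ne_of_lt (fLo_lt_fHi i)

lemma mem_CD_w0 (p : Fin n × Fin n) :
    p ∈ CD (w0 n) ↔ p.1.val + p.2.val + 2 ≤ n := by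
  rw [mem_CD, w0_inv]
  have h1 := p.1.isLt
  have h2 := p.2.isLt
  simp only [w0_apply, Fin.lt_def, Fin.val_rev]
  omega

lemma CD_empty_perm (v : Equiv.Perm (Fin n)) (j : Fin n) : (v j, j) ∉ CD v := by
  rw [mem_CD]
  rintro ⟨a, -⟩
  exact absurd a (lt_irrefl _)

lemma card_CD_lt (hn : 1 ≤ n) (v : Equiv.Perm (Fin n)) : (CD v).card < n * n := by
  have hsub : CD v ⊆ Finset.univ := Finset.subset_univ _
  have hne : CD v ≠ Finset.univ := by
    intro h
    have : ((v ⟨0, hn⟩, ⟨0, hn⟩) : Fin n × Fin n) ∈ CD v := h ▸ Finset.mem_univ _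
    rw [mem_CD] at this
    exact absurd this.1 (lt_irrefl _)
  calc (CD v).card < Finset.univ.card := Finset.card_lt_card (ssubset_of_subset_of_ne hsub hne)
    _ = n * n := by rw [Finset.card_univ, Fintype.card_prod, Fintype.card_fin]

lemma base_A (S : Equiv.Perm (Fin n) → MvPolynomial (Fin n ⊕ Fin n) ℤ)
    (hS : SchubertFamily n S) :
    specS (w0 n) (S (w0 n)) =
      ∏ p ∈ CD (w0 n), (X (w0 n p.2) - X p.1 : MvPolynomial (Fin n) ℤ) := by
  rw [hS.1, map_prod]
  rw [Finset.prod_congr rfl fun p _ => specS_factor (w0 n) p.1 p.2]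
  apply Finset.prod_nbij' (fun p => (p.2, p.1)) (fun p => (p.2, p.1))
  · intro p hp
    rw [mem_CD_w0]
    simp only [Finset.mem_filter] at hp
    show p.2.val + p.1.val + 2 ≤ n
    omega
  · intro p hp
    rw [mem_CD_w0] at hp
    simp only [Finset.mem_filter, Finset.mem_univ, true_and]
    show p.2.val + p.1.val + 2 ≤ n
    omega
  · intro p _; rfl
  · intro p _; rfl
  · intro p _; rfl

lemma base_B (hn : 1 ≤ n) (S : Equiv.Perm (Fin n) → MvPolynomial (Fin n ⊕ Fin n) ℤ)
    (hS : SchubertFamily n S) (u : Equiv.Perm (Fin n)) (hu : u ≠ w0 n) :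
    specS u (S (w0 n)) = 0 := by
  rw [hS.1, map_prod]
  have hj : ∃ j : Fin n, (u j).val + j.val + 2 ≤ n := by
    by_contra hno
    push_neg at hno
    apply hu
    have hle : ∀ j : Fin n, (w0 n j).val ≤ (u j).val := by
      intro j
      have h1 := hno j
      have h2 := j.isLt
      simp only [w0_apply, Fin.val_rev]
      omega
    have hsum : ∑ j : Fin n, (w0 n j).val = ∑ j : Fin n, (u j).val := by
      rw [Equiv.sum_comp (w0 n) (Fin.val), Equiv.sum_comp u (Fin.val)]
    have heq : ∀ j : Fin n, (w0 n j).val = (u j).val := by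
      by_contra hne
      push_neg at hne
      obtain ⟨j, hjne⟩ := hne
      have : ∑ j : Fin n, (w0 n j).val < ∑ j : Fin n, (u j).val :=
        Finset.sum_lt_sum (fun j _ => hle j)
          ⟨j, Finset.mem_univ j, lt_of_le_of_ne (hle j) hjne⟩
      omega
    exact Equiv.ext fun j => Fin.ext (heq j).symm
  obtain ⟨j, hj⟩ := hj
  apply Finset.prod_eq_zero (i := (j, u j))
  · simp only [Finset.mem_filter, Finset.mem_univ, true_and]
    omega
  · rw [specS_factor]
    exact sub_self _

theorem main_aux (hn : 1 ≤ n) (S : Equiv.Perm (Fin n) → MvPolynomial (Fin n ⊕ Fin n) ℤ)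
    (hS : SchubertFamily n S) :
    ∀ (m : ℕ) (v : Equiv.Perm (Fin n)), n * n - (CD v).card ≤ m →
      (specS v (S v) = ∏ p ∈ CD v, (X (v p.2) - X p.1 : MvPolynomial (Fin n) ℤ)) ∧
      (∀ u : Equiv.Perm (Fin n), (CD u).card < (CD v).card → specS u (S v) = 0) := by
  intro m
  induction m with
  | zero =>
    intro v hm
    have := card_CD_lt hn v
    omega
  | succ m ih =>
    intro v hm
    by_cases hv : v = w0 n
    · subst hv
      refine ⟨base_A S hS, fun u hu => base_B hn S hS u ?_⟩
      intro h
      rw [h] at hu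
      exact absurd hu (lt_irrefl _)
    · have hasc : ∃ i : Fin (n-1), v (fLo i) < v (fHi i) := by
        by_contra hno
        push_neg at hno
        exact hv (eq_w0_of_no_ascent v fun i hh => absurd hh (not_lt_of_ge (hno i)))
      obtain ⟨i, hasc⟩ := hasc
      have hcard := card_CD_mul v i hasc
      have hmw : n * n - (CD (v * sPerm i)).card ≤ m := by omega
      obtain ⟨hAw, hBw⟩ := ih (v * sPerm i) hmw
      have hlen : len (v * sPerm i * sPerm i) < len (v * sPerm i) := by
        rw [mul_sPerm_sPerm, len_eq, len_eq]
        omega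
      have hrec := hS.2 (v * sPerm i) i hlen
      rw [mul_sPerm_sPerm] at hrec
      have hfac : (X (v (fLo i)) - X (v (fHi i)) : MvPolynomial (Fin n) ℤ) ≠ 0 :=
        X_sub_X_ne (v.injective.ne (fLo_ne_fHi i))
      constructor
      · have key := congrArg (specS v) hrec
        rw [map_mul, map_sub, map_sub, specS_X_inl, specS_X_inl,
          specS_rename] at key
        rw [hBw v (by omega), hAw, prod_CD_mul v i hasc] at key
        apply mul_left_cancel₀ hfac
        rw [key]
        ring
      · intro u hu
        have key := congrArg (specS u) hrec
        rw [map_mul, map_sub, map_sub, specS_X_inl, specS_X_inl, specS_rename] at key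
        have h3 : specS (u * sPerm i) (S (v * sPerm i)) = 0 := by
          apply hBw
          have := card_CD_mul_le u i
          omega
        rw [hBw u (by omega), h3, sub_zero] at key
        rcases mul_eq_zero.mp key with h | h
        · exact absurd h (X_sub_X_ne (u.injective.ne (fLo_ne_fHi i)))
        · exact h

end SchbAux

/-- **Factorization of the diagonal specialization** (Fehér-Rimányi):
`𝔖_v(y_v; y) = ∏_{(i,j) ∈ C(D_v)} (y_{v(j)} - y_i)`. -/
theorem schubert_diagonal_specialization (n : ℕ) (hn : 1 ≤ n) (v : Equiv.Perm (Fin n))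
    (S : Equiv.Perm (Fin n) → MvPolynomial (Fin n ⊕ Fin n) ℤ) (hS : SchubertFamily n S) :
    specS v (S v) = ∏ p ∈ CD v, (X (v p.2) - X p.1 : MvPolynomial (Fin n) ℤ) :=
  (SchbAux.main_aux hn S hS (n * n) v (Nat.sub_le _ _)).1
end

section
/- Let v ∈ S_n. Then |C(D_v)| = ℓ(v), and the product in S_n of the simple transpositions s_{ν(i,j)} over all (i,j) ∈ C(D_v), taken in south-west to north-east order, equals v; that is, listing C(D_v) in south-west to north-east order yields a reduced expression for v. -/
set_option maxHeartbeats 1000000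
set_option synthInstance.maxHeartbeats 400000

open MvPolynomial

set_option linter.unusedSectionVars false

section Aux

/-! ### Inversions -/

def InvSet {n : ℕ} (v : Equiv.Perm (Fin n)) : Finset (Fin n × Fin n) :=
  Finset.univ.filter fun p => p.1 < p.2 ∧ v p.2 < v p.1

def Invv {n : ℕ} (v : Equiv.Perm (Fin n)) : ℕ := (InvSet v).card

lemma swap_val {n : ℕ} (a b z : Fin n) :
    ((Equiv.swap a b) z : ℕ) = if (z:ℕ) = a then (b:ℕ) else if (z:ℕ) = b then (a:ℕ) else z := by
  rcases eq_or_ne z a with rfl | hza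
  · simp
  · rcases eq_or_ne z b with rfl | hzb
    · rw [Equiv.swap_apply_right, if_neg (fun h => hza (Fin.ext h)), if_pos rfl]
    · rw [Equiv.swap_apply_of_ne_of_ne hza hzb, if_neg (fun h => hza (Fin.ext h)),
        if_neg (fun h => hzb (Fin.ext h))]

lemma swap_lt_iff {n : ℕ} {a b x y : Fin n} (hab : (a:ℕ)+1 = b) (hxy : x ≠ y)
    (h1 : ¬(x = a ∧ y = b)) (h2 : ¬(x = b ∧ y = a)) :
    (Equiv.swap a b x < Equiv.swap a b y ↔ x < y) := by
  have hxy' : (x:ℕ) ≠ y := fun h => hxy (Fin.ext h)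
  have h1' : ¬((x:ℕ) = a ∧ (y:ℕ) = b) := fun h => h1 ⟨Fin.ext h.1, Fin.ext h.2⟩
  have h2' : ¬((x:ℕ) = b ∧ (y:ℕ) = a) := fun h => h2 ⟨Fin.ext h.1, Fin.ext h.2⟩
  rw [Fin.lt_def, Fin.lt_def, swap_val, swap_val]
  split_ifs <;> omega

lemma invv_swap_le {n : ℕ} (a b : Fin n) (hab : (a:ℕ)+1 = b) (w : Equiv.Perm (Fin n)) :
    Invv (Equiv.swap a b * w) ≤ Invv w + 1 := by
  set t : Fin n × Fin n := if w⁻¹ a < w⁻¹ b then (w⁻¹ a, w⁻¹ b) else (w⁻¹ b, w⁻¹ a) with ht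
  have hsub : InvSet (Equiv.swap a b * w) ⊆ insert t (InvSet w) := by
    intro p hp
    rw [InvSet, Finset.mem_filter] at hp
    simp only [Finset.mem_univ, true_and,
      Equiv.Perm.mul_apply] at hp
    obtain ⟨h12, hlt⟩ := hp
    by_cases hc1 : w p.1 = a ∧ w p.2 = b
    · have e1 : p.1 = w⁻¹ a := by rw [← hc1.1]; simp
      have e2 : p.2 = w⁻¹ b := by rw [← hc1.2]; simp
      have : t = p := by
        rw [ht, if_pos (by rw [← e1, ← e2]; exact h12)]
        exact (Prod.ext_iff.2 ⟨e1.symm, e2.symm⟩)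
      simp [← this]
    · by_cases hc2 : w p.1 = b ∧ w p.2 = a
      · have e1 : p.1 = w⁻¹ b := by rw [← hc2.1]; simp
        have e2 : p.2 = w⁻¹ a := by rw [← hc2.2]; simp
        have : t = p := by
          rw [ht, if_neg (by rw [← e1, ← e2]; exact not_lt.2 h12.le)]
          exact (Prod.ext_iff.2 ⟨e1.symm, e2.symm⟩)
        simp [← this]
      · have hxy : w p.2 ≠ w p.1 := fun h => (ne_of_lt h12) ((w.injective h).symm)
        have := (swap_lt_iff hab hxy (fun h => hc2 ⟨h.2, h.1⟩) (fun h => hc1 ⟨h.2, h.1⟩)).1 hlt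
        exact Finset.mem_insert_of_mem (by simp [InvSet, h12, this])
  calc Invv (Equiv.swap a b * w) ≤ (insert t (InvSet w)).card := Finset.card_le_card hsub
    _ ≤ Invv w + 1 := Finset.card_insert_le _ _

lemma wordProd_nil {n : ℕ} : wordProd ([] : List (Fin (n-1))) = 1 := rfl

lemma wordProd_cons {n : ℕ} (i : Fin (n-1)) (l : List (Fin (n-1))) :
    wordProd (i :: l) = sPerm i * wordProd l := by simp [wordProd]

lemma invv_one {n : ℕ} : Invv (1 : Equiv.Perm (Fin n)) = 0 := by
  rw [Invv, Finset.card_eq_zero]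
  ext p
  rw [InvSet, Finset.mem_filter]
  simp only [Finset.mem_univ, true_and, Finset.notMem_empty,
    iff_false, Equiv.Perm.one_apply]
  rintro ⟨h1, h2⟩; exact absurd h1 (not_lt.2 h2.le)

lemma invv_wordProd_le {n : ℕ} (l : List (Fin (n-1))) : Invv (wordProd l) ≤ l.length := by
  induction l with
  | nil => simp [wordProd_nil, invv_one]
  | cons i l ih =>
    rw [wordProd_cons]
    calc Invv (sPerm i * wordProd l) ≤ Invv (wordProd l) + 1 :=
          invv_swap_le _ _ rfl (wordProd l)
      _ ≤ l.length + 1 := by omega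
      _ = (i :: l).length := by simp

/-! ### `CD` basics -/

lemma mem_CD {n : ℕ} {v : Equiv.Perm (Fin n)} {p : Fin n × Fin n} :
    p ∈ CD v ↔ p.1 < v p.2 ∧ p.2 < v⁻¹ p.1 := by simp [CD]

lemma mem_CD' {n : ℕ} {v : Equiv.Perm (Fin n)} {i j : Fin n} :
    (i, j) ∈ CD v ↔ (i:ℕ) < ((v j):ℕ) ∧ (j:ℕ) < ((v⁻¹ i):ℕ) := by
  rw [mem_CD, Fin.lt_def, Fin.lt_def]

lemma CD_card_eq_invv {n : ℕ} (v : Equiv.Perm (Fin n)) : (CD v).card = Invv v := by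
  apply Finset.card_bij (fun p _ => ((p.2 : Fin n), v⁻¹ p.1))
  · rintro ⟨i, j⟩ hp
    rw [mem_CD] at hp
    simp only [InvSet, Finset.mem_filter, Finset.mem_univ, true_and]
    exact ⟨hp.2, by simpa using hp.1⟩
  · rintro ⟨i, j⟩ hp ⟨i', j'⟩ hp' h
    simp only [Prod.mk.injEq] at h
    have : i = i' := v⁻¹.injective (by simp [h.2])
    simp [h.1, this]
  · rintro ⟨p, q⟩ hq
    simp only [InvSet, Finset.mem_filter, Finset.mem_univ, true_and] at hq
    refine ⟨(v q, p), ?_, ?_⟩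
    · rw [mem_CD]; exact ⟨by simpa using hq.2, by simpa using hq.1⟩
    · simp

/-! ### `swneAll` basics -/

lemma mem_swneAll {n : ℕ} (x : Fin n × Fin n) : x ∈ swneAll n := by
  rcases x with ⟨i, j⟩
  simp only [swneAll, List.mem_flatMap, List.mem_map, List.mem_reverse, List.mem_finRange]
  exact ⟨j, ⟨trivial, i, trivial, rfl⟩⟩

lemma nodup_swneAll (n : ℕ) : (swneAll n).Nodup := by
  rw [swneAll, List.nodup_flatMap]
  constructor
  · intro j _
    exact (List.nodup_reverse.2 (List.nodup_finRange n)).map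
      (fun a b h => congrArg Prod.fst h)
  · refine (List.nodup_finRange n).imp ?_
    intro j j' hne x h1 h2
    simp only [List.mem_map] at h1 h2
    obtain ⟨i, _, rfl⟩ := h1
    obtain ⟨i', _, he⟩ := h2
    exact hne ((congrArg Prod.snd he).symm)

lemma length_filter_swneAll {n : ℕ} (p : Fin n × Fin n → Bool) :
    ((swneAll n).filter p).length = (Finset.univ.filter (fun x => p x = true)).card := by
  have hnd : ((swneAll n).filter p).Nodup := (nodup_swneAll n).filter p
  rw [← List.toFinset_card_of_nodup hnd]
  congr 1
  ext x
  simp [List.mem_filter, mem_swneAll]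

/-! ### `len` via inversions -/

lemma len_eq_invv {n : ℕ} (v : Equiv.Perm (Fin n))
    (hex : ∃ l : List (Fin (n-1)), wordProd l = v ∧ l.length = Invv v) : len v = Invv v := by
  have h1 : len v ≤ Invv v := Nat.sInf_le hex
  have h2 : Invv v ≤ len v := by
    apply le_csInf ⟨Invv v, hex⟩
    rintro k ⟨l, hl, rfl⟩
    exact hl ▸ invv_wordProd_le l
  omega

lemma exists_word_of_natList {n : ℕ} (L : List ℕ) (hL : ∀ m ∈ L, 1 ≤ m ∧ m ≤ n - 1) :
    ∃ l : List (Fin (n-1)), wordProd l = (L.map (sPermN (n := n))).prod ∧ l.length = L.length := by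
  induction L with
  | nil => exact ⟨[], rfl, rfl⟩
  | cons m L ih =>
    obtain ⟨l, hl, hlen⟩ := ih (fun x hx => hL x (List.mem_cons_of_mem _ hx))
    have hm := hL m (List.mem_cons_self ..)
    refine ⟨⟨m-1, by omega⟩ :: l, ?_, by simp [hlen]⟩
    rw [wordProd_cons, hl, List.map_cons, List.prod_cons, sPermN, dif_pos hm]

/-! ### permutations fixing an initial segment -/

lemma fix_inv {n : ℕ} {w : Equiv.Perm (Fin n)} {j₀ : ℕ}
    (hfix : ∀ j : Fin n, (j:ℕ) < j₀ → w j = j) :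
    ∀ j : Fin n, (j:ℕ) < j₀ → w⁻¹ j = j := by
  intro j hj
  have h : w (w⁻¹ j) = w j := by rw [show w (w⁻¹ j) = j from w.apply_symm_apply j, hfix j hj]
  exact w.injective h

lemma pos_ge {n : ℕ} {w : Equiv.Perm (Fin n)} {j₀ : ℕ}
    (hfix : ∀ j : Fin n, (j:ℕ) < j₀ → w j = j) :
    ∀ j : Fin n, j₀ ≤ (j:ℕ) → j₀ ≤ ((w j):ℕ) := by
  intro j hj
  by_contra h
  push_neg at h
  have h2 : w (w j) = w j := hfix _ h
  have h3 := w.injective h2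
  rw [h3] at h
  omega

lemma col_empty {n : ℕ} {w : Equiv.Perm (Fin n)} {j₀ : ℕ}
    (hfix : ∀ j : Fin n, (j:ℕ) < j₀ → w j = j)
    {i j : Fin n} (hj : (j:ℕ) < j₀) : (i, j) ∉ CD w := by
  rw [mem_CD']
  rintro ⟨h1, h2⟩
  rw [hfix j hj] at h1
  have hi : (i:ℕ) < j₀ := by omega
  rw [fix_inv hfix i hi] at h2
  omega

lemma colj0_mem {n : ℕ} {w : Equiv.Perm (Fin n)} {j₀ : Fin n}
    (hfix : ∀ j : Fin n, (j:ℕ) < (j₀:ℕ) → w j = j) (i : Fin n) :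
    (i, j₀) ∈ CD w ↔ (j₀:ℕ) ≤ (i:ℕ) ∧ (i:ℕ) < ((w j₀):ℕ) := by
  rw [mem_CD']
  constructor
  · rintro ⟨h1, h2⟩
    refine ⟨?_, h1⟩
    by_contra h
    push_neg at h
    rw [fix_inv hfix i h] at h2
    omega
  · rintro ⟨h1, h2⟩
    refine ⟨h2, ?_⟩
    have hge := pos_ge (w := w⁻¹) (fix_inv hfix) i h1
    have hne : ((w⁻¹ i : Fin n) : ℕ) ≠ (j₀:ℕ) := by
      intro h
      have hf : w⁻¹ i = j₀ := Fin.ext h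
      have : w j₀ = i := by rw [← hf]; simp
      rw [this] at h2
      omega
    omega

/-! ### generic list manipulation on `finRange` -/

lemma mem_take_finRange {n k : ℕ} {x : Fin n} (h : x ∈ (List.finRange n).take k) :
    (x:ℕ) < k := by
  rw [List.mem_take_iff_getElem] at h
  obtain ⟨i, hi, hx⟩ := h
  rw [List.getElem_finRange] at hx
  have hv : (x:ℕ) = i := by rw [← hx]; rfl
  have := lt_of_lt_of_le hi inf_le_left
  omega

lemma mem_drop_finRange {n k : ℕ} {x : Fin n} (h : x ∈ (List.finRange n).drop k) :
    k ≤ (x:ℕ) := by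
  rw [List.mem_drop_iff_getElem] at h
  obtain ⟨i, hi, hx⟩ := h
  rw [List.getElem_finRange] at hx
  have hv : (x:ℕ) = k + i := by rw [← hx]; rfl
  omega

lemma finRange_decomp {n : ℕ} (a b : Fin n) (hab : (a:ℕ)+1 = (b:ℕ)) :
    List.finRange n = (List.finRange n).take (a:ℕ) ++
      a :: b :: (List.finRange n).drop ((b:ℕ)+1) := by
  have h1 : ((a:ℕ)) < (List.finRange n).length := by simpa using a.isLt
  have h2 : ((a:ℕ)+1) < (List.finRange n).length := by
    have := b.isLt; simp only [List.length_finRange]; omega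
  have e1 : (List.finRange n)[(a:ℕ)]'h1 = a := by
    rw [List.getElem_finRange]; exact Fin.ext rfl
  have e2 : (List.finRange n)[(a:ℕ)+1]'h2 = b := by
    rw [List.getElem_finRange]; exact Fin.ext (by simpa using hab)
  conv_lhs => rw [← List.take_append_drop (a:ℕ) (List.finRange n)]
  rw [List.drop_eq_getElem_cons h1, e1, List.drop_eq_getElem_cons h2, e2, ← hab]

lemma reverse_decomp {n : ℕ} (a b : Fin n) (hab : (a:ℕ)+1 = (b:ℕ)) :
    (List.finRange n).reverse = ((List.finRange n).drop ((b:ℕ)+1)).reverse ++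
      b :: a :: ((List.finRange n).take (a:ℕ)).reverse := by
  conv_lhs => rw [finRange_decomp a b hab]
  rw [List.reverse_append, List.reverse_cons, List.reverse_cons, List.append_assoc]
  simp

lemma map_swap_reverse {n : ℕ} (a b : Fin n) (hab : (a:ℕ)+1 = (b:ℕ)) :
    ((List.finRange n).reverse).map (Equiv.swap a b) =
      ((List.finRange n).drop ((b:ℕ)+1)).reverse ++
        a :: b :: ((List.finRange n).take (a:ℕ)).reverse := by
  have hd : (((List.finRange n).drop ((b:ℕ)+1)).reverse).map (Equiv.swap a b) =
      ((List.finRange n).drop ((b:ℕ)+1)).reverse := by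
    apply (List.map_congr_left ?_).trans (List.map_id _)
    intro x hx
    have := mem_drop_finRange (List.mem_reverse.1 hx)
    exact Equiv.swap_apply_of_ne_of_ne (fun h => by have := congrArg Fin.val h; omega)
      (fun h => by have := congrArg Fin.val h; omega)
  have ht : (((List.finRange n).take (a:ℕ)).reverse).map (Equiv.swap a b) =
      ((List.finRange n).take (a:ℕ)).reverse := by
    apply (List.map_congr_left ?_).trans (List.map_id _)
    intro x hx
    have := mem_take_finRange (List.mem_reverse.1 hx)
    exact Equiv.swap_apply_of_ne_of_ne (fun h => by have := congrArg Fin.val h; omega)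
      (fun h => by have := congrArg Fin.val h; omega)
  rw [reverse_decomp a b hab, List.map_append, List.map_cons, List.map_cons,
    Equiv.swap_apply_left, Equiv.swap_apply_right, hd, ht]

lemma filter_swap_eq {n : ℕ} (a b : Fin n) (hab : (a:ℕ)+1 = (b:ℕ)) (p : Fin n → Bool)
    (hpb : p b = false) :
    ((List.finRange n).reverse.map (Equiv.swap a b)).filter p =
      (List.finRange n).reverse.filter p := by
  rw [map_swap_reverse a b hab]
  conv_rhs => rw [reverse_decomp a b hab]
  simp only [List.filter_append, List.filter_cons, hpb, Bool.false_eq_true, if_false]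

lemma filter_insert_eq {n : ℕ} (a b : Fin n) (hab : (a:ℕ)+1 = (b:ℕ)) (p q : Fin n → Bool)
    (hpa : p a = true) (hqa : q a = false) (hpb : p b = false) (hqb : q b = false)
    (hsmall : ∀ i : Fin n, (a:ℕ) < (i:ℕ) → p i = false ∧ q i = false)
    (hoth : ∀ i : Fin n, i ≠ a → i ≠ b → p i = q i) :
    (List.finRange n).reverse.filter p = a :: (List.finRange n).reverse.filter q := by
  rw [reverse_decomp a b hab]
  simp only [List.filter_append, List.filter_cons, hpa, hqa, hpb, hqb,
    Bool.false_eq_true, if_false, if_true]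
  have h1 : ∀ r : Fin n → Bool, (∀ i : Fin n, (a:ℕ) < (i:ℕ) → r i = false) →
      ((((List.finRange n).drop ((b:ℕ)+1)).reverse).filter r) = [] := by
    intro r hr
    rw [List.filter_eq_nil_iff]
    intro x hx
    have := mem_drop_finRange (List.mem_reverse.1 hx)
    rw [hr x (by omega)]
    simp
  have h2 : ((((List.finRange n).take (a:ℕ)).reverse).filter p) =
      (((List.finRange n).take (a:ℕ)).reverse).filter q := by
    apply List.filter_congr
    intro x hx
    have := mem_take_finRange (List.mem_reverse.1 hx)
    exact hoth x (fun h => by have := congrArg Fin.val h; omega)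
      (fun h => by have := congrArg Fin.val h; omega)
  rw [h1 p (fun i hi => (hsmall i hi).1), h1 q (fun i hi => (hsmall i hi).2), h2]
  simp

lemma flatMap_insert {n : ℕ} {β : Type} (j₀ : Fin n) (g h : Fin n → List β) (x : β)
    (hg : ∀ j, g j = (if j = j₀ then [x] else []) ++ h j)
    (hh : ∀ j : Fin n, (j:ℕ) < (j₀:ℕ) → h j = []) :
    (List.finRange n).flatMap g = x :: (List.finRange n).flatMap h := by
  have congrFM : ∀ (L : List (Fin n)), (∀ j ∈ L, g j = h j) →
      L.flatMap g = L.flatMap h := by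
    intro L
    induction L with
    | nil => intro _; rfl
    | cons y L ih =>
      intro hy
      rw [List.flatMap_cons, List.flatMap_cons, hy y (by simp),
        ih (fun j hj => hy j (by simp [hj]))]
  have hdec : List.finRange n = (List.finRange n).take (j₀:ℕ) ++
      j₀ :: (List.finRange n).drop ((j₀:ℕ)+1) := by
    have h1 : ((j₀:ℕ)) < (List.finRange n).length := by simpa using j₀.isLt
    have e1 : (List.finRange n)[(j₀:ℕ)]'h1 = j₀ := by
      rw [List.getElem_finRange]; exact Fin.ext rfl
    conv_lhs => rw [← List.take_append_drop (j₀:ℕ) (List.finRange n)]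
    rw [List.drop_eq_getElem_cons h1, e1]
  conv_lhs => rw [hdec]
  conv_rhs => rw [hdec]
  rw [List.flatMap_append, List.flatMap_cons, List.flatMap_append, List.flatMap_cons]
  have e1 : ((List.finRange n).take (j₀:ℕ)).flatMap g = [] := by
    rw [List.flatMap_eq_nil_iff]
    intro j hj
    have hlt := mem_take_finRange hj
    rw [hg j, if_neg (fun h => by rw [h] at hlt; omega), hh j hlt]
    rfl
  have e2 : ((List.finRange n).take (j₀:ℕ)).flatMap h = [] := by
    rw [List.flatMap_eq_nil_iff]
    intro j hj
    exact hh j (mem_take_finRange hj)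
  have e3 : ((List.finRange n).drop ((j₀:ℕ)+1)).flatMap g =
      ((List.finRange n).drop ((j₀:ℕ)+1)).flatMap h := by
    apply congrFM
    intro j hj
    have := mem_drop_finRange hj
    rw [hg j, if_neg (fun h => by rw [h] at this; omega)]
    rfl
  rw [e1, e2, e3, hg j₀, if_pos rfl]
  simp

end Aux

lemma map_filter_swap {n : ℕ} (a b : Fin n) (hab : (a:ℕ)+1 = (b:ℕ)) (p q : Fin n → Bool)
    (hpb : p b = false) (hq : ∀ i, q i = p (Equiv.swap a b i)) {β : Type} (f : Fin n → β) :
    ((List.finRange n).reverse.filter q).map (f ∘ (Equiv.swap a b)) =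
      ((List.finRange n).reverse.filter p).map f := by
  have h1 : (List.finRange n).reverse.filter q =
      (List.finRange n).reverse.filter (p ∘ (Equiv.swap a b)) :=
    List.filter_congr (fun i _ => hq i)
  rw [h1, ← List.map_map, ← List.filter_map, filter_swap_eq a b hab p hpb]


section Step
variable {n : ℕ} {v : Equiv.Perm (Fin n)} {j₀ j₁ bLo bHi : Fin n} {c : ℕ}
  (hLo : (bLo:ℕ) + 1 = c) (hHi : (bHi:ℕ) = c) (hc : (j₀:ℕ) + 1 ≤ c)
  (hj0 : v j₀ = bHi) (hj1 : v j₁ = bLo)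
  (hfix : ∀ j : Fin n, (j:ℕ) < (j₀:ℕ) → v j = j)

include hLo hHi hc hj0 hj1 hfix

lemma val_ne_of_ne_cols {j : Fin n} (h0 : j ≠ j₀) (h1 : j ≠ j₁) :
    ((v j):ℕ) ≠ c - 1 ∧ ((v j):ℕ) ≠ c := by
  constructor
  · intro h
    exact h1 (v.injective (by rw [hj1]; exact Fin.ext (by omega)))
  · intro h
    exact h0 (v.injective (by rw [hj0]; exact Fin.ext (by omega)))

lemma inv_bHi : v⁻¹ bHi = j₀ := by rw [← hj0]; simp

lemma inv_bLo : v⁻¹ bLo = j₁ := by rw [← hj1]; simp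

lemma j0_lt_j1 : (j₀:ℕ) < (j₁:ℕ) := by
  have h1 : j₁ ≠ j₀ := by
    intro h
    rw [h, hj0] at hj1
    have := congrArg Fin.val hj1
    omega
  have h2 : ¬ ((j₁:ℕ) < (j₀:ℕ)) := by
    intro h
    have := hfix j₁ h
    rw [hj1] at this
    have := congrArg Fin.val this
    omega
  have := Fin.val_ne_of_ne h1
  omega

lemma swapv_inv_apply (i : Fin n) :
    (Equiv.swap bLo bHi * v)⁻¹ i = v⁻¹ (Equiv.swap bLo bHi i) := by
  rw [mul_inv_rev, Equiv.Perm.mul_apply, Equiv.swap_inv]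

lemma swapv_fix : ∀ j : Fin n, (j:ℕ) < (j₀:ℕ) → (Equiv.swap bLo bHi * v) j = j := by
  intro j hj
  rw [Equiv.Perm.mul_apply, hfix j hj]
  apply Equiv.swap_apply_of_ne_of_ne
  · intro h; have := congrArg Fin.val h; omega
  · intro h; have := congrArg Fin.val h; omega

lemma CD_swap_mem {i j : Fin n} (hjne : j ≠ j₀) :
    (i, j) ∈ CD (Equiv.swap bLo bHi * v) ↔ (Equiv.swap bLo bHi i, j) ∈ CD v := by
  have hinvrw : ∀ x : Fin n, ((Equiv.swap bLo bHi * v)⁻¹ x) = v⁻¹ (Equiv.swap bLo bHi x) :=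
    swapv_inv_apply hLo hHi hc hj0 hj1 hfix
  rw [mem_CD', mem_CD', hinvrw]
  have hσi := swap_val bLo bHi i
  have hσv := swap_val bLo bHi (v j)
  have happ : ((Equiv.swap bLo bHi * v) j : ℕ) = ((Equiv.swap bLo bHi (v j)) : ℕ) := rfl
  rw [happ]
  have hjne' : (j:ℕ) ≠ (j₀:ℕ) := Fin.val_ne_of_ne hjne
  by_cases hI : (i:ℕ) = (bLo:ℕ)
  · -- i = bLo, σ i = bHi
    have hieq : i = bLo := Fin.ext hI
    have hσieq : Equiv.swap bLo bHi i = bHi := by rw [hieq, Equiv.swap_apply_left]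
    rw [hσieq, inv_bHi hLo hHi hc hj0 hj1 hfix]
    constructor
    · rintro ⟨h1, h2⟩
      exfalso
      have hvj : v j = j := hfix j h2
      rw [hvj, swap_val] at h1
      split_ifs at h1 <;> omega
    · rintro ⟨h1, h2⟩
      exfalso
      have hvj : v j = j := hfix j h2
      rw [hvj] at h1
      omega
  · by_cases hI2 : (i:ℕ) = (bHi:ℕ)
    · -- i = bHi, σ i = bLo
      have hieq : i = bHi := Fin.ext hI2
      have hσieq : Equiv.swap bLo bHi i = bLo := by rw [hieq, Equiv.swap_apply_right]
      rw [hσieq, inv_bLo hLo hHi hc hj0 hj1 hfix]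
      by_cases hj1e : j = j₁
      · subst hj1e
        constructor
        · rintro ⟨_, h2⟩; omega
        · rintro ⟨_, h2⟩; omega
      · have hvals := val_ne_of_ne_cols hLo hHi hc hj0 hj1 hfix hjne hj1e
        rw [hσv, if_neg (by omega), if_neg (by omega)]
        constructor
        · rintro ⟨h1, h2⟩; exact ⟨by omega, h2⟩
        · rintro ⟨h1, h2⟩; exact ⟨by omega, h2⟩
    · -- generic i
      have hσieq : Equiv.swap bLo bHi i = i :=
        Equiv.swap_apply_of_ne_of_ne (fun h => hI (congrArg Fin.val h))
          (fun h => hI2 (congrArg Fin.val h))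
      rw [hσieq]
      by_cases hj1e : j = j₁
      · subst hj1e
        rw [hj1] at hσv ⊢
        rw [hσv, if_pos (by omega)]
        constructor
        · rintro ⟨h1, h2⟩; exact ⟨by omega, h2⟩
        · rintro ⟨h1, h2⟩; exact ⟨by omega, h2⟩
      · have hvals := val_ne_of_ne_cols hLo hHi hc hj0 hj1 hfix hjne hj1e
        rw [hσv, if_neg (by omega), if_neg (by omega)]
lemma swapv_j0 : ((Equiv.swap bLo bHi * v) j₀ : ℕ) = c - 1 := by
  rw [Equiv.Perm.mul_apply, hj0, Equiv.swap_apply_right]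
  omega

lemma CD_swapv_row_lt {i j : Fin n} (hmem : (i, j) ∈ CD (Equiv.swap bLo bHi * v))
    (hI : (i:ℕ) = (bLo:ℕ)) : False := by
  have h2 := (mem_CD'.1 hmem).2
  rw [swapv_inv_apply hLo hHi hc hj0 hj1 hfix] at h2
  have hieq : i = bLo := Fin.ext hI
  rw [hieq, Equiv.swap_apply_left, inv_bHi hLo hHi hc hj0 hj1 hfix] at h2
  exact col_empty (swapv_fix hLo hHi hc hj0 hj1 hfix) h2 hmem

lemma nu_swap {i j : Fin n} (hmem : (i, j) ∈ CD (Equiv.swap bLo bHi * v)) :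
    nu (Equiv.swap bLo bHi * v) (i, j) = nu v (Equiv.swap bLo bHi i, j) := by
  have hset : (Finset.univ.filter fun k => j < k ∧ (Equiv.swap bLo bHi * v) k < i) =
      (Finset.univ.filter fun k => j < k ∧ v k < Equiv.swap bLo bHi i) := by
    apply Finset.filter_congr
    intro k _
    by_cases hk : j < k
    · simp only [hk, true_and]
      have happ : ((Equiv.swap bLo bHi * v) k : ℕ) = ((Equiv.swap bLo bHi (v k)) : ℕ) := rfl
      rw [Fin.lt_def, Fin.lt_def, happ]
      by_cases hI : (i:ℕ) = (bLo:ℕ)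
      · exact absurd (CD_swapv_row_lt hLo hHi hc hj0 hj1 hfix hmem hI) id
      · by_cases hI2 : (i:ℕ) = (bHi:ℕ)
        · -- i = bHi, σ i = bLo
          have hieq : i = bHi := Fin.ext hI2
          have hσieq : Equiv.swap bLo bHi i = bLo := by rw [hieq, Equiv.swap_apply_right]
          rw [hσieq]
          have hjne : j ≠ j₀ := by
            intro h
            have h1 := (mem_CD'.1 hmem).1
            rw [h] at h1
            rw [swapv_j0 hLo hHi hc hj0 hj1 hfix] at h1
            omega
          have hjge : ¬ ((j:ℕ) < (j₀:ℕ)) := fun h =>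
            col_empty (swapv_fix hLo hHi hc hj0 hj1 hfix) h hmem
          have hkj0 : k ≠ j₀ := by
            intro h
            have h2 := Fin.lt_def.1 hk
            rw [h] at h2
            have := Fin.val_ne_of_ne hjne
            omega
          by_cases hkj1 : k = j₁
          · have h1 : ((Equiv.swap bLo bHi (v k)) : ℕ) = (bHi:ℕ) := by
              rw [hkj1, hj1, Equiv.swap_apply_left]
            have h2 : ((v k):ℕ) = (bLo:ℕ) := by rw [hkj1, hj1]
            omega
          · have hvals := val_ne_of_ne_cols hLo hHi hc hj0 hj1 hfix hkj0 hkj1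
            have h1 : ((Equiv.swap bLo bHi (v k)) : ℕ) = ((v k):ℕ) := by
              rw [swap_val, if_neg (by omega), if_neg (by omega)]
            omega
        · -- generic i
          have hσieq : Equiv.swap bLo bHi i = i :=
            Equiv.swap_apply_of_ne_of_ne (fun h => hI (congrArg Fin.val h))
              (fun h => hI2 (congrArg Fin.val h))
          rw [hσieq]
          by_cases hkj0 : k = j₀
          · have h1 : ((Equiv.swap bLo bHi (v k)) : ℕ) = (bLo:ℕ) := by
              rw [hkj0, hj0, Equiv.swap_apply_right]
            have h2 : ((v k):ℕ) = (bHi:ℕ) := by rw [hkj0, hj0]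
            omega
          · by_cases hkj1 : k = j₁
            · have h1 : ((Equiv.swap bLo bHi (v k)) : ℕ) = (bHi:ℕ) := by
                rw [hkj1, hj1, Equiv.swap_apply_left]
              have h2 : ((v k):ℕ) = (bLo:ℕ) := by rw [hkj1, hj1]
              omega
            · have hvals := val_ne_of_ne_cols hLo hHi hc hj0 hj1 hfix hkj0 hkj1
              have h1 : ((Equiv.swap bLo bHi (v k)) : ℕ) = ((v k):ℕ) := by
                rw [swap_val, if_neg (by omega), if_neg (by omega)]
              omega
    · simp [hk]
  simp only [nu]
  rw [hset]

lemma nu_p1 : nu v (bLo, j₀) = c := by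
  have hn : c < n := by have := bHi.isLt; omega
  have hcard : (Finset.univ.filter fun k => j₀ < k ∧ v k < bLo).card
      = (Finset.Ico (j₀:ℕ) (c-1)).card := by
    apply Finset.card_bij (fun k _ => ((v k : Fin n) : ℕ))
    · intro k hk
      simp only [Finset.mem_filter, Finset.mem_univ, true_and] at hk
      rw [Finset.mem_Ico]
      have h2 := Fin.lt_def.1 hk.2
      exact ⟨pos_ge hfix k (le_of_lt (Fin.lt_def.1 hk.1)), by omega⟩
    · intro k hk k' hk' h
      exact v.injective (Fin.ext h)
    · intro m hm
      rw [Finset.mem_Ico] at hm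
      have hmn : m < n := by omega
      refine ⟨v⁻¹ ⟨m, hmn⟩, ?_, by simp⟩
      simp only [Finset.mem_filter, Finset.mem_univ, true_and]
      have happ : v (v⁻¹ (⟨m, hmn⟩ : Fin n)) = ⟨m, hmn⟩ := v.apply_symm_apply _
      constructor
      · rw [Fin.lt_def]
        have hge := pos_ge (w := v⁻¹) (fix_inv hfix) ⟨m, hmn⟩ (by simpa using hm.1)
        have hne : ((v⁻¹ (⟨m, hmn⟩ : Fin n)) : ℕ) ≠ (j₀:ℕ) := by
          intro h
          have heq : v⁻¹ (⟨m, hmn⟩ : Fin n) = j₀ := Fin.ext h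
          rw [heq, hj0] at happ
          have := congrArg Fin.val happ
          simp only [] at this
          omega
        omega
      · rw [Fin.lt_def, happ]
        simp only []
        omega
  simp only [nu]
  rw [hcard, Nat.card_Ico]
  omega


lemma row_bHi_empty {j : Fin n} (hjne : j ≠ j₀) : (bHi, j) ∉ CD v := by
  rw [mem_CD']
  rintro ⟨h1, h2⟩
  rw [inv_bHi hLo hHi hc hj0 hj1 hfix] at h2
  rw [hfix j h2] at h1
  omega

lemma step_list :
    (swneAll n).filter (· ∈ CD v) =
      ((bLo, j₀) : Fin n × Fin n) ::
        ((swneAll n).filter (· ∈ CD (Equiv.swap bLo bHi * v))).map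
          (fun p => (Equiv.swap bLo bHi p.1, p.2)) := by
  have hab : (bLo:ℕ)+1 = (bHi:ℕ) := by omega
  have hfix' := swapv_fix hLo hHi hc hj0 hj1 hfix
  have hvj0' : ((Equiv.swap bLo bHi * v) j₀ : ℕ) = c - 1 :=
    swapv_j0 hLo hHi hc hj0 hj1 hfix
  rw [swneAll, List.filter_flatMap, List.filter_flatMap, List.map_flatMap]
  apply flatMap_insert j₀ _ _ ((bLo, j₀) : Fin n × Fin n)
  · intro j
    rw [List.filter_map, List.filter_map, List.map_map]
    by_cases hj : j = j₀
    · rw [hj, if_pos rfl]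
      have hkey : ((List.finRange n).reverse).filter
            ((fun p => decide (p ∈ CD v)) ∘ (fun i => (i, j₀))) =
          bLo :: ((List.finRange n).reverse).filter
            ((fun p => decide (p ∈ CD (Equiv.swap bLo bHi * v))) ∘ (fun i => (i, j₀))) := by
        apply filter_insert_eq bLo bHi hab
        · exact decide_eq_true ((colj0_mem hfix bLo).2 ⟨by omega, by rw [hj0]; omega⟩)
        · exact decide_eq_false (fun hm => by
            have := (colj0_mem hfix' bLo).1 hm
            rw [hvj0'] at this
            omega)
        · exact decide_eq_false (fun hm => by
            have := (colj0_mem hfix bHi).1 hm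
            rw [hj0] at this
            omega)
        · exact decide_eq_false (fun hm => by
            have := (colj0_mem hfix' bHi).1 hm
            rw [hvj0'] at this
            omega)
        · intro i hi
          constructor
          · exact decide_eq_false (fun hm => by
              have := (colj0_mem hfix i).1 hm
              rw [hj0] at this
              omega)
          · exact decide_eq_false (fun hm => by
              have := (colj0_mem hfix' i).1 hm
              rw [hvj0'] at this
              omega)
        · intro i hiLo hiHi
          have h1 : (i:ℕ) ≠ (bLo:ℕ) := fun h => hiLo (Fin.ext h)
          have h2 : (i:ℕ) ≠ (bHi:ℕ) := fun h => hiHi (Fin.ext h)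
          apply decide_eq_decide.mpr
          show ((i, j₀) ∈ CD v) ↔ ((i, j₀) ∈ CD (Equiv.swap bLo bHi * v))
          rw [colj0_mem hfix i, colj0_mem hfix' i, hvj0', hj0]
          omega
      rw [hkey, List.map_cons]
      have hmapid : ((List.finRange n).reverse.filter
            ((fun p => decide (p ∈ CD (Equiv.swap bLo bHi * v))) ∘ (fun i => (i, j₀)))).map
            (fun i => (i, j₀)) =
          ((List.finRange n).reverse.filter
            ((fun p => decide (p ∈ CD (Equiv.swap bLo bHi * v))) ∘ (fun i => (i, j₀)))).map
            ((fun p : Fin n × Fin n => (Equiv.swap bLo bHi p.1, p.2)) ∘ (fun i => (i, j₀))) := by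
        apply List.map_congr_left
        intro x hx
        have hmem : (x, j₀) ∈ CD (Equiv.swap bLo bHi * v) :=
          of_decide_eq_true (List.mem_filter.1 hx).2
        have := (colj0_mem hfix' x).1 hmem
        rw [hvj0'] at this
        have hfixx : Equiv.swap bLo bHi x = x :=
          Equiv.swap_apply_of_ne_of_ne (fun h => by have := congrArg Fin.val h; omega)
            (fun h => by have := congrArg Fin.val h; omega)
        simp only [Function.comp_apply, hfixx]
      rw [hmapid]
      rfl
    · rw [if_neg hj, List.nil_append]
      have hpb : ((fun p => decide (p ∈ CD v)) ∘ (fun i => (i, j))) bHi = false :=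
        decide_eq_false (row_bHi_empty hLo hHi hc hj0 hj1 hfix hj)
      have hq : ∀ i, ((fun p => decide (p ∈ CD (Equiv.swap bLo bHi * v))) ∘ (fun i => (i, j))) i
          = ((fun p => decide (p ∈ CD v)) ∘ (fun i => (i, j))) (Equiv.swap bLo bHi i) := by
        intro i
        exact decide_eq_decide.mpr (CD_swap_mem hLo hHi hc hj0 hj1 hfix hj)
      have := map_filter_swap bLo bHi hab
        ((fun p => decide (p ∈ CD v)) ∘ (fun i => (i, j)))
        ((fun p => decide (p ∈ CD (Equiv.swap bLo bHi * v))) ∘ (fun i => (i, j)))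
        hpb hq (fun i => ((i, j) : Fin n × Fin n))
      rw [← this]
      apply List.map_congr_left
      intro x hx
      rfl
  · intro j hjlt
    have hfix' := swapv_fix hLo hHi hc hj0 hj1 hfix
    have : (((List.finRange n).reverse.map (fun i => (i, j))).filter
        (fun p => decide (p ∈ CD (Equiv.swap bLo bHi * v)))) = [] := by
      rw [List.filter_eq_nil_iff]
      intro x hx
      obtain ⟨i, _, rfl⟩ := List.mem_map.1 hx
      simp only [decide_eq_true_eq]
      exact col_empty hfix' hjlt
    rw [this]
    rfl

end Step


lemma nu_bounds {n : ℕ} {v : Equiv.Perm (Fin n)} {p : Fin n × Fin n} (hp : p ∈ CD v) :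
    1 ≤ nu v p ∧ nu v p ≤ n - 1 := by
  obtain ⟨i, j⟩ := p
  have hp' := mem_CD'.1 hp
  have hjn := (v⁻¹ i).isLt
  have hsub : (Finset.univ.filter fun k => j < k ∧ v k < i) ⊆ (Finset.Ioi j).erase (v⁻¹ i) := by
    intro k hk
    simp only [Finset.mem_filter, Finset.mem_univ, true_and] at hk
    rw [Finset.mem_erase, Finset.mem_Ioi]
    refine ⟨?_, hk.1⟩
    intro h
    rw [h, show v (v⁻¹ i) = i from v.apply_symm_apply i] at hk
    exact lt_irrefl i hk.2
  have hmemIoi : v⁻¹ i ∈ Finset.Ioi j := Finset.mem_Ioi.2 (Fin.lt_def.2 hp'.2)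
  have hcard : (Finset.univ.filter fun k => j < k ∧ v k < i).card ≤ (Finset.Ioi j).card - 1 :=
    calc (Finset.univ.filter fun k => j < k ∧ v k < i).card
        ≤ ((Finset.Ioi j).erase (v⁻¹ i)).card := Finset.card_le_card hsub
      _ = (Finset.Ioi j).card - 1 := Finset.card_erase_of_mem hmemIoi
  rw [Fin.card_Ioi] at hcard
  have he : nu v (i, j) = (j:ℕ) + 1 + (Finset.univ.filter fun k => j < k ∧ v k < i).card := rfl
  rw [he]
  omega

lemma length_filter_CD {n : ℕ} (v : Equiv.Perm (Fin n)) :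
    ((swneAll n).filter (· ∈ CD v)).length = (CD v).card := by
  rw [length_filter_swneAll]
  congr 1
  ext x
  simp

lemma step_exists {n : ℕ} (v : Equiv.Perm (Fin n)) (hv : v ≠ 1) :
    ∃ (cc : ℕ) (v' : Equiv.Perm (Fin n)),
      sPermN cc * v' = v ∧
      ((swneAll n).filter (· ∈ CD v)).map (fun p => sPermN (nu v p)) =
        sPermN (n := n) cc ::
          ((swneAll n).filter (· ∈ CD v')).map (fun p => sPermN (nu v' p)) := by
  have hex : ∃ j, v j ≠ j := by
    by_contra h
    push_neg at h
    exact hv (Equiv.ext h)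
  obtain ⟨jw, hjw⟩ := hex
  obtain ⟨j₀, hj₀mem, hj₀min⟩ :=
    (Finset.univ.filter (fun j => v j ≠ j)).exists_min_image id ⟨jw, by simp [hjw]⟩
  have hvj₀ : v j₀ ≠ j₀ := by simpa using hj₀mem
  have hfix : ∀ j : Fin n, (j:ℕ) < (j₀:ℕ) → v j = j := by
    intro j hj
    by_contra hne
    have := hj₀min j (by simp [hne])
    rw [Fin.le_def] at this
    simp only [id] at this
    omega
  have hcn : ((v j₀ : Fin n) : ℕ) < n := (v j₀).isLt
  have hge : (j₀:ℕ) ≤ ((v j₀:Fin n):ℕ) := pos_ge hfix j₀ le_rfl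
  have hneq : ((v j₀:Fin n):ℕ) ≠ (j₀:ℕ) := fun h => hvj₀ (Fin.ext h)
  have hc : (j₀:ℕ) + 1 ≤ ((v j₀:Fin n):ℕ) := by omega
  set cc : ℕ := ((v j₀:Fin n):ℕ) with hccdef
  set bLo : Fin n := ⟨cc - 1, by omega⟩ with hbLodef
  set bHi : Fin n := v j₀ with hbHidef
  have hLo : (bLo:ℕ) + 1 = cc := by
    rw [hbLodef]
    simp only []
    omega
  have hHi : (bHi:ℕ) = cc := rfl
  have hj0 : v j₀ = bHi := rfl
  set j₁ := v⁻¹ bLo with hj₁def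
  have hj1 : v j₁ = bLo := v.apply_symm_apply bLo
  have hsc : (sPermN cc : Equiv.Perm (Fin n)) = Equiv.swap bLo bHi := by
    rw [sPermN, dif_pos ⟨by omega, by omega⟩, sPerm]
    congr 1
    exact Fin.ext (by simp only []; omega)
  refine ⟨cc, Equiv.swap bLo bHi * v, ?_, ?_⟩
  · rw [hsc, ← mul_assoc, Equiv.swap_mul_self, one_mul]
  · rw [step_list hLo hHi hc hj0 hj1 hfix, List.map_cons, List.map_map]
    congr 1
    · rw [nu_p1 hLo hHi hc hj0 hj1 hfix, hsc]
    · apply List.map_congr_left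
      intro p hp
      have hmem : ((p.1, p.2) : Fin n × Fin n) ∈ CD (Equiv.swap bLo bHi * v) :=
        of_decide_eq_true (List.mem_filter.1 hp).2
      have hns := nu_swap hLo hHi hc hj0 hj1 hfix hmem
      simp only [Function.comp_apply]
      rw [← hns]

lemma master_prod {n : ℕ} : ∀ (m : ℕ) (v : Equiv.Perm (Fin n)), Invv v = m →
    (((swneAll n).filter (· ∈ CD v)).map fun p => sPermN (nu v p)).prod = v := by
  intro m
  induction m using Nat.strong_induction_on with
  | _ m ih =>
    intro v hm
    by_cases hv : v = 1
    · subst hv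
      have hnil : (swneAll n).filter (· ∈ CD (1 : Equiv.Perm (Fin n))) = [] := by
        rw [List.filter_eq_nil_iff]
        intro p _
        simp only [decide_eq_true_eq]
        rw [mem_CD]
        simp only [Equiv.Perm.one_apply, inv_one]
        intro h
        exact absurd h.1 (not_lt.2 h.2.le)
      rw [hnil]
      rfl
    · obtain ⟨cc, v', hprod, hlist⟩ := step_exists v hv
      have hInv : Invv v = Invv v' + 1 := by
        have hll := congrArg List.length hlist
        simp only [List.length_map, List.length_cons] at hll
        rw [← CD_card_eq_invv, ← CD_card_eq_invv, ← length_filter_CD, ← length_filter_CD]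
        omega
      have hv' := ih (Invv v') (by omega) v' rfl
      rw [hlist, List.prod_cons, hv', hprod]

/-- **The crossing positions give a reduced word** (Buch-Rimányi):
`|C(D_v)| = ℓ(v)`, and the product of the `s_{ν(i,j)}` over `(i,j) ∈ C(D_v)`
in south-west to north-east order is a reduced expression for `v`. -/
theorem crossing_positions_reduced_word (n : ℕ) (hn : 1 ≤ n) (v : Equiv.Perm (Fin n)) :
    (CD v).card = len v ∧
    ((swneAll n).filter (· ∈ CD v)).length = len v ∧
    (((swneAll n).filter (· ∈ CD v)).map fun p => sPermN (nu v p)).prod = v := by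
  have hmaster := master_prod (Invv v) v rfl
  have hword : ∃ l : List (Fin (n-1)), wordProd l = v ∧ l.length = Invv v := by
    have hbounds : ∀ m ∈ ((swneAll n).filter (· ∈ CD v)).map (nu v), 1 ≤ m ∧ m ≤ n - 1 := by
      intro m hm
      obtain ⟨p, hp, rfl⟩ := List.mem_map.1 hm
      exact nu_bounds (of_decide_eq_true (List.mem_filter.1 hp).2)
    obtain ⟨l, hl, hlen⟩ := exists_word_of_natList _ hbounds
    refine ⟨l, ?_, ?_⟩
    · rw [hl, List.map_map]
      exact hmaster
    · rw [hlen, List.length_map, length_filter_CD, CD_card_eq_invv]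
  have hlen : len v = Invv v := len_eq_invv v hword
  refine ⟨?_, ?_, hmaster⟩
  · rw [hlen, CD_card_eq_invv]
  · rw [hlen, length_filter_CD, CD_card_eq_invv]
end
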